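/- arXiv:1403.3855 — 5 statements merged into one kernel-verified Lean document; each statement's English description precedes it below -/
import Mathlib

section
/- Let (V,E) be an infinite digraph with countable vertex set and let Q be a finitely decomposable acyclic flow on (V,E) with div Q = μ₁ − μ₂ for probability measures μ₁, μ₂ on V. Then there exists a coupling ρ between μ₁ and μ₂ such that ρ(x,y) = 0 whenever x ≠ y and there is no directed path from x to y in the digraph (V,E(Q)). -/
open scoped BigOperators

variable {V : Type*}

/-- A directed path in the digraph `(V, E)`: a nonempty list of vertices whose
consecutive pairs are directed edges. -/
def IsDipath (E : Set (V × V)) (l : List V) : Prop :=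
  l ≠ [] ∧ l.Chain' (fun a b => (a, b) ∈ E)

/-- The list of directed edges of a path. -/
def pathEdges (l : List V) : List (V × V) := l.zip l.tail

/-- The unit flow `Q_γ` along a path: `1` on the edges of the path and `0` elsewhere. -/
noncomputable def pathFlow (l : List V) : V × V → ℝ :=
  Set.indicator {e | e ∈ pathEdges l} 1

/-- A flow on the digraph `(V, E)`: nonnegative and supported on `E`. -/
def IsFlow (E : Set (V × V)) (Q : V × V → ℝ) : Prop :=
  (∀ e, 0 ≤ Q e) ∧ ∀ e, e ∉ E → Q e = 0

/-- The divergence of a flow at a vertex. -/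
noncomputable def divergence (Q : V × V → ℝ) (x : V) : ℝ :=
  (∑' y, Q (x, y)) - ∑' y, Q (y, x)

/-- A relation is acyclic if it has no directed cycles. -/
def AcyclicRel (r : V → V → Prop) : Prop := ∀ x, ¬ Relation.TransGen r x x

/-- The edge relation of a digraph. -/
def edgeRel (E : Set (V × V)) : V → V → Prop := fun a b => (a, b) ∈ E

/-- The partial order induced by an acyclic digraph: `x ≤ y` iff `x = y` or there is
a directed path from `x` to `y`. -/
def inducedLE (E : Set (V × V)) : V → V → Prop :=
  Relation.ReflTransGen (edgeRel E)

/-- A finitely decomposable flow: a pointwise sum `∑ₙ qₙ Q_{γₙ}` over finite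
self-avoiding directed paths with summable nonnegative weights. -/
def FinDecomposable (E : Set (V × V)) (Q : V × V → ℝ) : Prop :=
  ∃ (γ : ℕ → List V) (q : ℕ → ℝ),
    (∀ n, IsDipath E (γ n)) ∧ (∀ n, (γ n).Nodup) ∧ (∀ n, 0 ≤ q n) ∧ Summable q ∧
    ∀ e, Q e = ∑' n, q n * pathFlow (γ n) e

/-- A probability measure on a countable set, as a nonnegative function of total sum `1`. -/
def IsProb (μ : V → ℝ) : Prop := (∀ x, 0 ≤ μ x) ∧ HasSum μ 1

/-- A coupling of `μ₁` and `μ₂`: a probability on `V × V` with the given marginals. -/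
def IsCoupling (μ₁ μ₂ : V → ℝ) (ρ : V × V → ℝ) : Prop :=
  (∀ p, 0 ≤ ρ p) ∧ (∀ x, HasSum (fun y => ρ (x, y)) (μ₁ x)) ∧
    ∀ y, HasSum (fun x => ρ (x, y)) (μ₂ y)

/-- Stochastic domination: `∑ f μ₁ ≤ ∑ f μ₂` for every bounded increasing `f`. -/
def StochDom (le : V → V → Prop) (μ₁ μ₂ : V → ℝ) : Prop :=
  ∀ f : V → ℝ, (∃ C, ∀ x, |f x| ≤ C) → (∀ x y, le x y → f x ≤ f y) →
    ∑' x, f x * μ₁ x ≤ ∑' x, f x * μ₂ x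

/-- Finite-case divergence. -/
noncomputable def divergenceF [Fintype V] (Q : V × V → ℝ) (x : V) : ℝ :=
  (∑ y, Q (x, y)) - ∑ y, Q (y, x)

/-- Probability measure on a finite set. -/
def IsProbF [Fintype V] (μ : V → ℝ) : Prop := (∀ x, 0 ≤ μ x) ∧ ∑ x, μ x = 1

/-- Coupling on a finite set. -/
def IsCouplingF [Fintype V] (μ₁ μ₂ : V → ℝ) (ρ : V × V → ℝ) : Prop :=
  (∀ p, 0 ≤ ρ p) ∧ (∀ x, ∑ y, ρ (x, y) = μ₁ x) ∧ ∀ y, ∑ x, ρ (x, y) = μ₂ y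

/-- Stochastic domination on a finite set. -/
def StochDomF [Fintype V] (le : V → V → Prop) (μ₁ μ₂ : V → ℝ) : Prop :=
  ∀ f : V → ℝ, (∀ x y, le x y → f x ≤ f y) → ∑ x, f x * μ₁ x ≤ ∑ x, f x * μ₂ x

/-- The cost of a path: the sum of the weights of its edges. -/
noncomputable def pathCost (w : V × V → ℝ) (l : List V) : ℝ := ((pathEdges l).map w).sum

/-- The geodesic cost associated to a weight function on a digraph. -/
noncomputable def geoCost (E : Set (V × V)) (w : V × V → ℝ) (x y : V) : ℝ :=
  sInf {r | ∃ l, IsDipath E l ∧ l.head? = some x ∧ l.getLast? = some y ∧ pathCost w l = r}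

/-!
Write `Q = ∑ₙ qₙ Q_{γₙ}`. A self-avoiding path contributes `qₙ (δ_{head} - δ_{last})` to `div Q`,
so if `ν x y` is the total weight of the paths from `x` to `y`, the mass `μ₁ x + ∑_z ν z x`
entering `x` equals the mass `μ₂ x + ∑_y ν x y` leaving it. Call it `m x` (`throughput`), and
run the sub-Markov chain started from `μ₁` which at `x` jumps to `y` with probability
`ν x y / m x` and stops with probability `μ₂ x / m x`. The expected number of visits to `y`
is at most `m y`, and `∑ m < ∞`, so the chain stops almost surely; the law of (start, stop)
is then a coupling of `μ₁` and `μ₂`, and it only links `x` to `y` along paths of positive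
flow.
-/

open scoped ENNReal
open Filter Topology Finset

lemma ENNReal.eq_of_le_of_tsum_eq {α : Type*} {f g : α → ℝ≥0∞} (hle : ∀ a, f a ≤ g a)
    (hsum : ∑' a, f a = ∑' a, g a) (hg : ∑' a, g a ≠ ∞) : f = g :=
  funext fun a => (hle a).eq_or_lt.resolve_right fun hlt =>
    (ENNReal.tsum_lt_tsum (hsum ▸ hg) hle hlt).ne hsum

lemma ENNReal.toReal_sub_eq_of_add_eq {a b c d : ℝ≥0∞} (h : a + b = c + d)
    (hfin : a + b ≠ ∞) : a.toReal - c.toReal = d.toReal - b.toReal := by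
  have hfin' : c + d ≠ ∞ := h ▸ hfin
  have h' := congrArg ENNReal.toReal h
  rw [ENNReal.toReal_add (ENNReal.add_ne_top.1 hfin).1 (ENNReal.add_ne_top.1 hfin).2,
    ENNReal.toReal_add (ENNReal.add_ne_top.1 hfin').1 (ENNReal.add_ne_top.1 hfin').2] at h'
  linarith

lemma ENNReal.hasSum_toReal_of_tsum_eq_ofReal {α : Type*} {f : α → ℝ≥0∞} {a : ℝ}
    (ha : 0 ≤ a) (h : ∑' i, f i = ENNReal.ofReal a) : HasSum (fun i => (f i).toReal) a := by
  have hfin : ∑' i, f i ≠ ∞ := h ▸ ENNReal.ofReal_ne_top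
  convert ENNReal.hasSum_toReal hfin
  rw [← ENNReal.tsum_toReal_eq fun i => ne_top_of_le_ne_top hfin (ENNReal.le_tsum i), h,
    ENNReal.toReal_ofReal ha]

lemma tsum_eq_toReal_tsum_ofReal {α : Type*} {f : α → ℝ} (hf : ∀ a, 0 ≤ f a) :
    ∑' a, f a = (∑' a, ENNReal.ofReal (f a)).toReal := by
  rw [ENNReal.tsum_toReal_eq fun _ => ENNReal.ofReal_ne_top]
  exact tsum_congr fun a => (ENNReal.toReal_ofReal (hf a)).symm

namespace Transport

variable (ν : V → V → ℝ≥0∞) (μ₁ μ₂ : V → ℝ≥0∞)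

noncomputable def throughput (x : V) : ℝ≥0∞ := μ₁ x + ∑' z, ν z x

noncomputable def evolve (s : V → ℝ≥0∞) : ℕ → V → ℝ≥0∞
  | 0 => s
  | k + 1 => fun y => ∑' z, evolve s k z * (ν z y / throughput ν μ₁ z)

noncomputable def alive (s : V → ℝ≥0∞) (k : ℕ) : ℝ≥0∞ := ∑' y, evolve ν μ₁ s k y

noncomputable def absorbed (s : V → ℝ≥0∞) (k : ℕ) : ℝ≥0∞ :=
  ∑' z, evolve ν μ₁ s k z * (μ₂ z / throughput ν μ₁ z)

/-- The mass of `μ₁` that starts at `x` and is absorbed at `y`. -/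
noncomputable def plan [DecidableEq V] (x y : V) : ℝ≥0∞ :=
  μ₁ x * (∑' k, evolve ν μ₁ (Pi.single x 1) k y) * (μ₂ y / throughput ν μ₁ y)

variable {ν μ₁ μ₂}

lemma sum_range_evolve_le (K : ℕ) (y : V) :
    ∑ k ∈ range K, evolve ν μ₁ μ₁ k y ≤ throughput ν μ₁ y := by
  induction K generalizing y with
  | zero => simp
  | succ K ih =>
    rw [sum_range_succ', throughput, add_comm (μ₁ y)]
    refine add_le_add_left ?_ _
    calc ∑ k ∈ range K, evolve ν μ₁ μ₁ (k + 1) y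
        = ∑' z, (∑ k ∈ range K, evolve ν μ₁ μ₁ k z) * (ν z y / throughput ν μ₁ z) := by
          simp only [evolve, sum_mul]
          exact (Summable.tsum_finsetSum fun _ _ => ENNReal.summable).symm
      _ ≤ ∑' z, throughput ν μ₁ z * (ν z y / throughput ν μ₁ z) :=
          ENNReal.tsum_le_tsum fun z => mul_le_mul_left (ih z) _
      _ ≤ ∑' z, ν z y := ENNReal.tsum_le_tsum fun z => ENNReal.mul_div_le

lemma tsum_evolve_le (y : V) : ∑' k, evolve ν μ₁ μ₁ k y ≤ throughput ν μ₁ y := by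
  rw [ENNReal.tsum_eq_iSup_nat]
  exact iSup_le fun K => sum_range_evolve_le K y

lemma evolve_le (k : ℕ) (y : V) : evolve ν μ₁ μ₁ k y ≤ throughput ν μ₁ y :=
  (ENNReal.le_tsum k).trans (tsum_evolve_le y)

lemma tendsto_alive (hfin : ∑' x, throughput ν μ₁ x ≠ ∞) :
    Tendsto (alive ν μ₁ μ₁) atTop (𝓝 0) := by
  refine ENNReal.tendsto_atTop_zero_of_tsum_ne_top (ne_top_of_le_ne_top hfin ?_)
  simp only [alive]
  rw [ENNReal.tsum_comm]
  exact ENNReal.tsum_le_tsum tsum_evolve_le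

lemma tsum_mul_evolve_single [DecidableEq V] (s : V → ℝ≥0∞) (k : ℕ) (y : V) :
    ∑' x, s x * evolve ν μ₁ (Pi.single x 1) k y = evolve ν μ₁ s k y := by
  induction k generalizing y with
  | zero =>
    simp only [evolve]
    rw [tsum_eq_single y fun x hx => by simp [Ne.symm hx]]
    simp
  | succ k ih =>
    simp only [evolve, ← ENNReal.tsum_mul_left, ← mul_assoc]
    rw [ENNReal.tsum_comm]
    simp only [ENNReal.tsum_mul_right, ih]

lemma tsum_plan_left [DecidableEq V] (y : V) :
    ∑' x, plan ν μ₁ μ₂ x y = (∑' k, evolve ν μ₁ μ₁ k y) * (μ₂ y / throughput ν μ₁ y) := by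
  simp only [plan, ENNReal.tsum_mul_right, ← ENNReal.tsum_mul_left]
  rw [ENNReal.tsum_comm]
  simp only [tsum_mul_evolve_single]

lemma tsum_plan_left_le [DecidableEq V] (y : V) : ∑' x, plan ν μ₁ μ₂ x y ≤ μ₂ y := by
  rw [tsum_plan_left]
  exact (mul_le_mul_left (tsum_evolve_le y) _).trans ENNReal.mul_div_le

lemma reflTransGen_of_evolve_single_ne_zero [DecidableEq V] {x y : V} {k : ℕ}
    (h : evolve ν μ₁ (Pi.single x 1) k y ≠ 0) :
    Relation.ReflTransGen (fun a b => ν a b ≠ 0) x y := by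
  induction k generalizing y with
  | zero =>
    obtain rfl : y = x := by_contra fun hyx => h (by simp [evolve, hyx])
    exact .refl
  | succ k ih =>
    obtain ⟨z, hz⟩ := not_forall.1 (mt ENNReal.tsum_eq_zero.2 h)
    obtain ⟨hxz, hzy⟩ := mul_ne_zero_iff.1 hz
    exact (ih hxz).tail fun h0 => hzy (by simp [h0])

lemma reflTransGen_of_plan_ne_zero [DecidableEq V] {x y : V} (h : plan ν μ₁ μ₂ x y ≠ 0) :
    Relation.ReflTransGen (fun a b => ν a b ≠ 0) x y := by
  unfold plan at h
  obtain ⟨k, hk⟩ :=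
    not_forall.1 (mt ENNReal.tsum_eq_zero.2 (right_ne_zero_of_mul (left_ne_zero_of_mul h)))
  exact reflTransGen_of_evolve_single_ne_zero hk

section Balanced

variable (hbal : ∀ x, throughput ν μ₁ x = μ₂ x + ∑' y, ν x y)
include hbal

lemma absorbed_add_alive_succ (s : V → ℝ≥0∞) (k : ℕ) :
    absorbed ν μ₁ μ₂ s k + alive ν μ₁ s (k + 1) =
      ∑' z, evolve ν μ₁ s k z * (throughput ν μ₁ z / throughput ν μ₁ z) := by
  have hout (z : V) :
      ∑' y, ν z y / throughput ν μ₁ z = (∑' y, ν z y) / throughput ν μ₁ z := by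
    simp only [div_eq_mul_inv, ENNReal.tsum_mul_right]
  simp only [absorbed, alive, evolve]
  rw [ENNReal.tsum_comm (f := fun y z => _), ← ENNReal.tsum_add]
  refine tsum_congr fun z => ?_
  rw [ENNReal.tsum_mul_left, ← mul_add, hout, ENNReal.div_add_div_same, ← hbal]

lemma sum_absorbed_add_alive_le (s : V → ℝ≥0∞) (K : ℕ) :
    ∑ k ∈ range K, absorbed ν μ₁ μ₂ s k + alive ν μ₁ s K ≤ alive ν μ₁ s 0 := by
  induction K with
  | zero => simp
  | succ K ih =>
    rw [sum_range_succ, add_assoc, absorbed_add_alive_succ hbal]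
    refine le_trans (add_le_add le_rfl ?_) ih
    exact ENNReal.tsum_le_tsum fun z => mul_le_of_le_one_right' ENNReal.div_self_le_one

lemma sum_absorbed_add_alive_eq (hfin : ∀ x, throughput ν μ₁ x ≠ ∞) (K : ℕ) :
    ∑ k ∈ range K, absorbed ν μ₁ μ₂ μ₁ k + alive ν μ₁ μ₁ K = alive ν μ₁ μ₁ 0 := by
  induction K with
  | zero => simp
  | succ K ih =>
    have hstep (z : V) : evolve ν μ₁ μ₁ K z * (throughput ν μ₁ z / throughput ν μ₁ z) =
        evolve ν μ₁ μ₁ K z := by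
      rcases eq_or_ne (throughput ν μ₁ z) 0 with h | h
      · simp [le_antisymm (h ▸ evolve_le K z) bot_le]
      · rw [ENNReal.div_self h (hfin z), mul_one]
    rw [sum_range_succ, add_assoc, absorbed_add_alive_succ hbal, tsum_congr hstep, ← ih]
    rfl

lemma tsum_absorbed (hfin : ∑' x, throughput ν μ₁ x ≠ ∞) :
    ∑' k, absorbed ν μ₁ μ₂ μ₁ k = ∑' x, μ₁ x := by
  have hfin' (x : V) : throughput ν μ₁ x ≠ ∞ := ne_top_of_le_ne_top hfin (ENNReal.le_tsum x)
  have hlim := (ENNReal.tendsto_nat_tsum (absorbed ν μ₁ μ₂ μ₁)).add (tendsto_alive hfin)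
  simp only [sum_absorbed_add_alive_eq hbal hfin', add_zero] at hlim
  exact tendsto_nhds_unique hlim tendsto_const_nhds

lemma tsum_absorbed_single_le_one [DecidableEq V] (x : V) :
    ∑' k, absorbed ν μ₁ μ₂ (Pi.single x 1) k ≤ 1 := by
  rw [ENNReal.tsum_eq_iSup_nat]
  exact iSup_le fun K =>
    le_self_add.trans ((sum_absorbed_add_alive_le hbal _ K).trans_eq (tsum_pi_single x 1))

lemma tsum_plan_right_le [DecidableEq V] (x : V) : ∑' y, plan ν μ₁ μ₂ x y ≤ μ₁ x := by
  calc ∑' y, plan ν μ₁ μ₂ x y = μ₁ x * ∑' k, absorbed ν μ₁ μ₂ (Pi.single x 1) k := by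
        simp only [plan, absorbed, mul_assoc, ENNReal.tsum_mul_left]
        simp only [← ENNReal.tsum_mul_right]
        rw [ENNReal.tsum_comm]
    _ ≤ μ₁ x := mul_le_of_le_one_right' (tsum_absorbed_single_le_one hbal x)

lemma tsum_tsum_plan [DecidableEq V] (hfin : ∑' x, throughput ν μ₁ x ≠ ∞) :
    ∑' y, ∑' x, plan ν μ₁ μ₂ x y = ∑' x, μ₁ x := by
  simp only [tsum_plan_left, ← ENNReal.tsum_mul_right]
  rw [ENNReal.tsum_comm]
  exact tsum_absorbed hbal hfin

end Balanced

theorem exists_plan (hbal : ∀ x, μ₁ x + ∑' z, ν z x = μ₂ x + ∑' y, ν x y)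
    (h₁ : ∑' x, μ₁ x ≠ ∞) (hν : ∑' x, ∑' y, ν x y ≠ ∞) :
    ∃ ρ : V → V → ℝ≥0∞, (∀ x, ∑' y, ρ x y = μ₁ x) ∧ (∀ y, ∑' x, ρ x y = μ₂ y) ∧
      ∀ x y, ρ x y ≠ 0 → Relation.ReflTransGen (fun a b => ν a b ≠ 0) x y := by
  classical
  have hfin : ∑' x, throughput ν μ₁ x ≠ ∞ := by
    simp only [throughput, ENNReal.tsum_add]
    rw [ENNReal.tsum_comm (f := fun x z => ν z x)]
    exact ENNReal.add_ne_top.2 ⟨h₁, hν⟩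
  have hmass : ∑' x, μ₂ x = ∑' x, μ₁ x := by
    have h : ∑' x, (μ₁ x + ∑' z, ν z x) = ∑' x, (μ₂ x + ∑' y, ν x y) := tsum_congr hbal
    rw [ENNReal.tsum_add, ENNReal.tsum_add, ENNReal.tsum_comm (f := fun x z => ν z x)] at h
    exact ((ENNReal.add_left_inj hν).1 h).symm
  have htotal := tsum_tsum_plan hbal hfin
  refine ⟨plan ν μ₁ μ₂, fun x => ?_, fun y => ?_, fun x y => reflTransGen_of_plan_ne_zero⟩
  · refine congrFun (ENNReal.eq_of_le_of_tsum_eq (tsum_plan_right_le hbal) ?_ h₁) x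
    rw [ENNReal.tsum_comm, htotal]
  · refine congrFun (ENNReal.eq_of_le_of_tsum_eq tsum_plan_left_le ?_ (hmass ▸ h₁)) y
    rw [htotal, hmass]

end Transport

section PathEdges

lemma pathEdges_eq_zip_dropLast (l : List V) : pathEdges l = l.dropLast.zip l.tail := by
  induction l using List.twoStepInduction with
  | nil | singleton => rfl
  | cons_cons a b l _ ih => simpa [pathEdges] using ih b

lemma map_fst_pathEdges (l : List V) : (pathEdges l).map Prod.fst = l.dropLast := by
  rw [pathEdges_eq_zip_dropLast, List.map_fst_zip (by simp)]

lemma map_snd_pathEdges (l : List V) : (pathEdges l).map Prod.snd = l.tail :=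
  List.map_snd_zip (by simp)

lemma List.Nodup.pathEdges {l : List V} (hl : l.Nodup) : (pathEdges l).Nodup :=
  .of_map Prod.fst (map_fst_pathEdges l ▸ hl.sublist (List.dropLast_sublist l))

lemma isChain_of_forall_mem_pathEdges {R : V → V → Prop} {l : List V}
    (h : ∀ a b, (a, b) ∈ pathEdges l → R a b) : l.IsChain R := by
  rw [List.isChain_iff_forall₂, List.forall₂_iff_zip]
  exact ⟨by simp, fun hab => h _ _ (pathEdges_eq_zip_dropLast l ▸ hab)⟩

variable [DecidableEq V]

lemma count_dropLast_add_ite (l : List V) (x : V) :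
    l.dropLast.count x + (if l.getLast? = some x then 1 else 0) = l.count x := by
  rcases h : l.getLast? with _ | a
  · simp_all
  · rw [← List.dropLast_append_getLast? a h]
    simp [List.count_append, List.count_singleton]

lemma count_tail_add_ite (l : List V) (x : V) :
    l.tail.count x + (if l.head? = some x then 1 else 0) = l.count x := by
  cases l <;> simp [List.count_cons]

lemma tsum_ite_mem_eq_count_fst {L : List (V × V)} (hL : L.Nodup) (x : V) :
    ∑' y, (if (x, y) ∈ L then 1 else 0 : ℝ≥0∞) = (L.map Prod.fst).count x := by
  induction L with
  | nil => simp
  | cons p L ih =>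
    obtain ⟨a, b⟩ := p
    rw [List.nodup_cons] at hL
    have hsplit (y : V) : (if (x, y) ∈ (a, b) :: L then 1 else 0 : ℝ≥0∞) =
        (if x = a ∧ y = b then 1 else 0) + if (x, y) ∈ L then 1 else 0 := by
      by_cases h : x = a ∧ y = b
      · obtain ⟨rfl, rfl⟩ := h
        simp [hL.1]
      · simp [h]
    rw [tsum_congr hsplit, ENNReal.tsum_add, ih hL.2]
    rcases eq_or_ne x a with rfl | hx
    · simp [add_comm]
    · simp [hx, Ne.symm hx]

lemma tsum_ite_mem_eq_count_snd {L : List (V × V)} (hL : L.Nodup) (x : V) :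
    ∑' y, (if (y, x) ∈ L then 1 else 0 : ℝ≥0∞) = (L.map Prod.snd).count x := by
  have hswap : (Prod.fst ∘ Prod.swap : V × V → V) = Prod.snd := rfl
  simpa [List.map_map, hswap] using tsum_ite_mem_eq_count_fst (hL.map Prod.swap_injective) x

end PathEdges

section PathDecomposition

variable [DecidableEq V] (γ : ℕ → List V) (w : ℕ → ℝ≥0∞)

noncomputable def endpointMeasure (x y : V) : ℝ≥0∞ :=
  ∑' n, if (γ n).head? = some x ∧ (γ n).getLast? = some y then w n else 0

lemma tsum_endpointMeasure_right (x : V) :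
    ∑' y, endpointMeasure γ w x y = ∑' n, if (γ n).head? = some x then w n else 0 := by
  simp only [endpointMeasure]
  rw [ENNReal.tsum_comm]
  refine tsum_congr fun n => ?_
  cases γ n with
  | nil => simp
  | cons a l => by_cases h : a = x <;> simp [h, List.getLast?_eq_some_getLast]

lemma tsum_endpointMeasure_left (y : V) :
    ∑' x, endpointMeasure γ w x y = ∑' n, if (γ n).getLast? = some y then w n else 0 := by
  simp only [endpointMeasure]
  rw [ENNReal.tsum_comm]
  refine tsum_congr fun n => ?_
  cases γ n with
  | nil => simp
  | cons a l => by_cases h : (a :: l).getLast? = some y <;> simp [h]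

lemma tsum_tsum_endpointMeasure_le : ∑' x, ∑' y, endpointMeasure γ w x y ≤ ∑' n, w n := by
  simp only [tsum_endpointMeasure_right]
  rw [ENNReal.tsum_comm]
  refine ENNReal.tsum_le_tsum fun n => ?_
  cases γ n <;> simp

variable {γ} {q : ℕ → ℝ} {Q : V × V → ℝ}

lemma ofReal_eq_tsum_of_decomposition (hq : ∀ n, 0 ≤ q n) (hqs : Summable q)
    (hQ : ∀ e, Q e = ∑' n, q n * pathFlow (γ n) e) (e : V × V) :
    ENNReal.ofReal (Q e) =
      ∑' n, ENNReal.ofReal (q n) * if e ∈ pathEdges (γ n) then 1 else 0 := by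
  have hterm (n : ℕ) : q n * pathFlow (γ n) e = if e ∈ pathEdges (γ n) then q n else 0 := by
    simp [pathFlow, Set.indicator_apply]
  have hnonneg (n : ℕ) : 0 ≤ if e ∈ pathEdges (γ n) then q n else 0 := by
    split_ifs <;> simp [hq n]
  have hle (n : ℕ) : (if e ∈ pathEdges (γ n) then q n else 0) ≤ q n := by
    split_ifs <;> simp [hq n]
  rw [hQ, tsum_congr hterm,
    ENNReal.ofReal_tsum_of_nonneg hnonneg (hqs.of_nonneg_of_le hnonneg hle)]
  exact tsum_congr fun n => by split_ifs <;> simp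

lemma reflTransGen_of_endpointMeasure_ne_zero (hq : ∀ n, 0 ≤ q n) (hqs : Summable q)
    (hQ : ∀ e, Q e = ∑' n, q n * pathFlow (γ n) e) {a b : V}
    (h : endpointMeasure γ (ENNReal.ofReal ∘ q) a b ≠ 0) :
    Relation.ReflTransGen (fun u v => 0 < Q (u, v)) a b := by
  obtain ⟨n, hn⟩ := not_forall.1 (mt ENNReal.tsum_eq_zero.2 h)
  obtain ⟨⟨hhead, hlast⟩, hw⟩ := ite_ne_right_iff.1 hn
  have hchain : (γ n).IsChain fun u v => 0 < Q (u, v) := by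
    refine isChain_of_forall_mem_pathEdges fun u v huv => ?_
    rw [← ENNReal.ofReal_pos, ofReal_eq_tsum_of_decomposition hq hqs hQ]
    exact lt_of_lt_of_le (by simpa [huv, pos_iff_ne_zero] using hw) (ENNReal.le_tsum n)
  obtain ⟨l, hl⟩ := List.head?_eq_some_iff.1 hhead
  rw [hl] at hchain hlast
  exact List.relationReflTransGen_of_exists_isChain_cons l hchain
    (Option.some_inj.1 ((List.getLast?_eq_some_getLast _).symm.trans hlast))

variable (hq : ∀ n, 0 ≤ q n) (hqs : Summable q) (hγ : ∀ n, (γ n).Nodup)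
  (hQ : ∀ e, Q e = ∑' n, q n * pathFlow (γ n) e)
include hq hqs hγ hQ

lemma tsum_ofReal_out_add_endpoint_in (x : V) :
    ∑' y, ENNReal.ofReal (Q (x, y)) + ∑' z, endpointMeasure γ (ENNReal.ofReal ∘ q) z x =
      ∑' n, ENNReal.ofReal (q n) * (γ n).count x := by
  simp only [ofReal_eq_tsum_of_decomposition hq hqs hQ, tsum_endpointMeasure_left]
  rw [ENNReal.tsum_comm, ← ENNReal.tsum_add]
  refine tsum_congr fun n => ?_
  rw [ENNReal.tsum_mul_left, tsum_ite_mem_eq_count_fst (hγ n).pathEdges, map_fst_pathEdges,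
    ← count_dropLast_add_ite (γ n) x]
  split_ifs <;> simp [mul_add]

lemma tsum_ofReal_in_add_endpoint_out (x : V) :
    ∑' z, ENNReal.ofReal (Q (z, x)) + ∑' y, endpointMeasure γ (ENNReal.ofReal ∘ q) x y =
      ∑' n, ENNReal.ofReal (q n) * (γ n).count x := by
  simp only [ofReal_eq_tsum_of_decomposition hq hqs hQ, tsum_endpointMeasure_right]
  rw [ENNReal.tsum_comm, ← ENNReal.tsum_add]
  refine tsum_congr fun n => ?_
  rw [ENNReal.tsum_mul_left, tsum_ite_mem_eq_count_snd (hγ n).pathEdges, map_snd_pathEdges,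
    ← count_tail_add_ite (γ n) x]
  split_ifs <;> simp [mul_add]

lemma divergence_eq_of_decomposition (x : V) :
    divergence Q x = (∑' y, endpointMeasure γ (ENNReal.ofReal ∘ q) x y).toReal -
      (∑' z, endpointMeasure γ (ENNReal.ofReal ∘ q) z x).toReal := by
  have hQ0 (e : V × V) : 0 ≤ Q e := (hQ e).symm ▸ tsum_nonneg fun n =>
    mul_nonneg (hq n) (Set.indicator_nonneg (fun _ _ => zero_le_one) _)
  have hvisits : ∑' n, ENNReal.ofReal (q n) * (γ n).count x ≠ ∞ := by
    refine ne_top_of_le_ne_top hqs.tsum_ofReal_ne_top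
      (ENNReal.tsum_le_tsum fun n => mul_le_of_le_one_right' ?_)
    exact_mod_cast List.nodup_iff_count_le_one.1 (hγ n) x
  have hout := tsum_ofReal_out_add_endpoint_in hq hqs hγ hQ x
  have hin := tsum_ofReal_in_add_endpoint_out hq hqs hγ hQ x
  rw [divergence, tsum_eq_toReal_tsum_ofReal fun y => hQ0 _,
    tsum_eq_toReal_tsum_ofReal fun z => hQ0 _]
  exact ENNReal.toReal_sub_eq_of_add_eq (hout.trans hin.symm) (hout ▸ hvisits)

lemma ofReal_add_tsum_endpointMeasure_eq {μ₁ μ₂ : V → ℝ} (h₁ : ∀ x, 0 ≤ μ₁ x)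
    (h₂ : ∀ x, 0 ≤ μ₂ x) (hdiv : ∀ x, divergence Q x = μ₁ x - μ₂ x) (x : V) :
    ENNReal.ofReal (μ₁ x) + ∑' z, endpointMeasure γ (ENNReal.ofReal ∘ q) z x =
      ENNReal.ofReal (μ₂ x) + ∑' y, endpointMeasure γ (ENNReal.ofReal ∘ q) x y := by
  set ν := endpointMeasure γ (ENNReal.ofReal ∘ q)
  have hν : ∑' x, ∑' y, ν x y ≠ ∞ :=
    ne_top_of_le_ne_top hqs.tsum_ofReal_ne_top (tsum_tsum_endpointMeasure_le γ _)
  have hout : ∑' y, ν x y ≠ ∞ := ne_top_of_le_ne_top hν (ENNReal.le_tsum x)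
  have hin : ∑' z, ν z x ≠ ∞ :=
    ne_top_of_le_ne_top hν (ENNReal.tsum_comm (f := fun z y => ν z y) ▸ ENNReal.le_tsum x)
  rw [← ENNReal.ofReal_toReal hout, ← ENNReal.ofReal_toReal hin,
    ← ENNReal.ofReal_add (h₁ x) ENNReal.toReal_nonneg,
    ← ENNReal.ofReal_add (h₂ x) ENNReal.toReal_nonneg]
  congr 1
  linarith [hdiv x, divergence_eq_of_decomposition hq hqs hγ hQ x]

end PathDecomposition

theorem fin_dec_flow_gives_coupling_general {V : Type*}
    (E : Set (V × V))
    (Q : V × V → ℝ) (hfd : FinDecomposable E Q)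
    (μ₁ μ₂ : V → ℝ) (h₁ : IsProb μ₁) (h₂ : IsProb μ₂)
    (hdiv : ∀ x, divergence Q x = μ₁ x - μ₂ x) :
    ∃ ρ : V × V → ℝ, IsCoupling μ₁ μ₂ ρ ∧
      ∀ p : V × V, p.1 ≠ p.2 →
        ¬ Relation.TransGen (fun a b => 0 < Q (a, b)) p.1 p.2 → ρ p = 0 := by
  classical
  obtain ⟨γ, q, -, hγ, hq, hqs, hQ⟩ := hfd
  obtain ⟨ρ, hrow, hcol, hsupp⟩ := Transport.exists_plan
    (ofReal_add_tsum_endpointMeasure_eq hq hqs hγ hQ h₁.1 h₂.1 hdiv)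
    h₁.2.summable.tsum_ofReal_ne_top
    (ne_top_of_le_ne_top hqs.tsum_ofReal_ne_top (tsum_tsum_endpointMeasure_le γ _))
  refine ⟨fun p => (ρ p.1 p.2).toReal, ⟨fun p => ENNReal.toReal_nonneg,
    fun x => ENNReal.hasSum_toReal_of_tsum_eq_ofReal (h₁.1 x) (hrow x),
    fun y => ENNReal.hasSum_toReal_of_tsum_eq_ofReal (h₂.1 y) (hcol y)⟩, ?_⟩
  rintro ⟨x, y⟩ hxy hpath
  by_contra hρ
  have hreach : Relation.ReflTransGen (fun a b => 0 < Q (a, b)) x y :=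
    Relation.ReflTransGen.lift' id
      (fun a b hab => reflTransGen_of_endpointMeasure_ne_zero hq hqs hQ hab)
      x y (hsupp x y fun h0 => hρ (by simp [h0]))
  exact hpath ((Relation.reflTransGen_iff_eq_or_transGen.1 hreach).resolve_left (Ne.symm hxy))

/-- **From a finitely decomposable acyclic flow to a compatible coupling, infinite case.**
Given a finitely decomposable acyclic flow `Q` on an infinite countable digraph with
`div Q = μ₁ - μ₂`, there is a coupling `ρ` of `μ₁, μ₂` with `ρ(x,y) = 0` whenever `x ≠ y`
and there is no directed path from `x` to `y` in `(V, E(Q))`. -/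
theorem fin_dec_flow_gives_coupling {V : Type*} [Countable V] [Infinite V]
    (E : Set (V × V)) (hloop : ∀ x : V, (x, x) ∉ E)
    (Q : V × V → ℝ) (hQ : IsFlow E Q) (hfd : FinDecomposable E Q)
    (hacyc : AcyclicRel fun a b => 0 < Q (a, b))
    (μ₁ μ₂ : V → ℝ) (h₁ : IsProb μ₁) (h₂ : IsProb μ₂)
    (hdiv : ∀ x, divergence Q x = μ₁ x - μ₂ x) :
    ∃ ρ : V × V → ℝ, IsCoupling μ₁ μ₂ ρ ∧
      ∀ p : V × V, p.1 ≠ p.2 →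
        ¬ Relation.TransGen (fun a b => 0 < Q (a, b)) p.1 p.2 → ρ p = 0 :=
  fin_dec_flow_gives_coupling_general E Q hfd μ₁ μ₂ h₁ h₂ hdiv
end

section
/- Let (V,E) be a finite digraph such that the associated undirected graph (V,𝓔_E) is a tree, and let ≤ be the partial order induced by (V,E) (assumed acyclic). For an edge {x,y} ∈ 𝓔_E with x ≤ y, removing it splits the tree into two connected components T₋^{x,y} (containing x) and T₊^{x,y} (containing y). Then for probability measures μ₁, μ₂ on V the equation div Q = μ₁ − μ₂ has the unique real-valued solution Q(x,y) = ∑_{z ∈ T₋^{x,y}} (μ₁(z) − μ₂(z)), and μ₁ ⪯ μ₂ if and only if ∑_{z ∈ T₋^{e}} (μ₁(z) − μ₂(z)) ≥ 0 for every edge e ∈ 𝓔_E. -/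
open scoped BigOperators

variable {V : Type*}

/-- The undirected graph associated to a digraph. -/
def symGraph {V : Type*} (E : Set (V × V)) : SimpleGraph V where
  Adj a b := a ≠ b ∧ ((a, b) ∈ E ∨ (b, a) ∈ E)
  symm := by
    constructor
    intro a b h
    exact ⟨Ne.symm h.1, h.2.symm⟩
  loopless := by
    constructor
    intro a h
    exact h.1 rfl

/-- The connected component of `e.1` after removing the undirected edge `{e.1, e.2}`. -/
def Tminus {V : Type*} (E : Set (V × V)) (e : V × V) : Set V :=
  {z | ((symGraph E).deleteEdges {s(e.1, e.2)}).Reachable e.1 z}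

/-- The candidate solution on a tree: the net mass of `μ₁ - μ₂` in the component below
the edge. -/
noncomputable def treeSol {V : Type*} [Fintype V] (E : Set (V × V)) (μ₁ μ₂ : V → ℝ)
    (e : V × V) : ℝ :=
  ∑ z, Set.indicator (Tminus E e) (fun z => μ₁ z - μ₂ z) z

/-!
Deleting an edge `{a, b}` of a tree splits it into the side `T₋^{a,b}` of `a` and the side of
`b`, and `{a, b}` is the only edge between them. Acyclicity rules out `(b, a) ∈ E`, so `(a, b)`
is the only edge of `E` crossing the cut and summing `div Q = μ₁ - μ₂` over `T₋^{a,b}` gives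
`Q (a, b) = (μ₁ - μ₂)(T₋^{a,b})`: the solution is unique. For existence, the sides `T₋^{y,x}`
of the neighbours `y` of `x` partition `V ∖ {x}`, so the candidate has divergence
`-(μ₁ - μ₂)(V ∖ {x})` at `x`, which is `μ₁ x - μ₂ x` as the masses are equal. Every `T₋^{a,b}` is a down-set of the induced order,
so testing `μ₁ ⪯ μ₂` against minus its indicator shows that the solution is nonnegative; conversely,
summation by parts against a nonnegative solution proves the domination.
-/

namespace SimpleGraph

variable {G : SimpleGraph V} {a b u v x z : V}

def cutSide (G : SimpleGraph V) (a b : V) : Set V :=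
  {z | (G.deleteEdges {s(a, b)}).Reachable a z}

lemma Reachable.mem_of_adj_closed {S : Set V} (h : G.Reachable a z) (ha : a ∈ S)
    (hS : ∀ ⦃u v⦄, u ∈ S → G.Adj u v → v ∈ S) : z ∈ S := by
  rw [reachable_iff_reflTransGen] at h
  induction h with
  | refl => exact ha
  | tail _ huv ih => exact hS ih huv

lemma self_mem_cutSide (a b : V) : a ∈ G.cutSide a b := Reachable.refl _

lemma mem_cutSide_of_adj (hu : u ∈ G.cutSide a b) (huv : G.Adj u v)
    (hne : s(u, v) ≠ s(a, b)) : v ∈ G.cutSide a b :=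
  hu.trans (deleteEdges_adj.2 ⟨huv, hne⟩).reachable

lemma eq_of_adj_of_mem_cutSide_of_notMem (hu : u ∈ G.cutSide a b) (hv : v ∉ G.cutSide a b)
    (huv : G.Adj u v) : s(u, v) = s(a, b) :=
  by_contra fun hne => hv (mem_cutSide_of_adj hu huv hne)

lemma Preconnected.mem_cutSide_or (hG : G.Preconnected) (a b z : V) :
    z ∈ G.cutSide a b ∨ z ∈ G.cutSide b a := by
  refine (hG a z).mem_of_adj_closed (S := G.cutSide a b ∪ G.cutSide b a)
    (Or.inl (self_mem_cutSide a b)) ?_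
  intro u v hu huv
  by_cases he : s(u, v) = s(a, b)
  · rcases Sym2.eq_iff.1 he with ⟨-, rfl⟩ | ⟨-, rfl⟩
    · exact Or.inr (self_mem_cutSide _ _)
    · exact Or.inl (self_mem_cutSide _ _)
  · exact hu.imp (mem_cutSide_of_adj · huv he)
      (mem_cutSide_of_adj · huv (by rwa [Sym2.eq_swap (a := b)]))

lemma IsAcyclic.notMem_cutSide_swap (hG : G.IsAcyclic) (hab : G.Adj a b)
    (hz : z ∈ G.cutSide a b) : z ∉ G.cutSide b a := by
  intro hz'
  rw [cutSide, Set.mem_ofPred_eq, Sym2.eq_swap] at hz'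
  exact isAcyclic_iff_forall_adj_isBridge.1 hG hab (hz.trans hz'.symm)

lemma IsTree.cutSide_swap (hG : G.IsTree) (hab : G.Adj a b) :
    G.cutSide b a = (G.cutSide a b)ᶜ := by
  ext z
  exact ⟨fun hz h => hG.isAcyclic.notMem_cutSide_swap hab h hz,
    fun hz => (hG.connected.preconnected.mem_cutSide_or a b z).resolve_left hz⟩

lemma IsTree.notMem_cutSide_of_adj (hG : G.IsTree) (hab : G.Adj a b) : b ∉ G.cutSide a b :=
  hG.isAcyclic.notMem_cutSide_swap hab.symm (self_mem_cutSide b a)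

lemma Preconnected.exists_adj_mem_cutSide (hG : G.Preconnected) (hz : z ≠ x) :
    ∃ y, G.Adj x y ∧ z ∈ G.cutSide y x := by
  suffices z = x ∨ ∃ y, G.Adj x y ∧ z ∈ G.cutSide y x from this.resolve_left hz
  refine (hG x z).mem_of_adj_closed (S := {w | w = x ∨ ∃ y, G.Adj x y ∧ w ∈ G.cutSide y x})
    (Or.inl rfl) ?_
  rintro u v (rfl | ⟨y, hxy, hu⟩) huv
  · exact Or.inr ⟨v, huv, self_mem_cutSide v u⟩
  by_cases he : s(u, v) = s(y, x)
  · rcases Sym2.eq_iff.1 he with ⟨-, rfl⟩ | ⟨rfl, rfl⟩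
    · exact Or.inl rfl
    · exact Or.inr ⟨v, hxy, self_mem_cutSide v u⟩
  · exact Or.inr ⟨y, hxy, mem_cutSide_of_adj hu huv he⟩

-- A walk from `y'` that avoids the edge `{x, y'}` never visits `x`, so it avoids `{x, y}` too.
lemma IsAcyclic.cutSide_subset_cutSide {y y' : V} (hG : G.IsAcyclic) (hxy' : G.Adj x y')
    (hne : y' ≠ y) : G.cutSide y' x ⊆ G.cutSide x y := by
  intro w hw
  have hx : x ∉ G.cutSide y' x := hG.notMem_cutSide_swap hxy' (self_mem_cutSide x y')
  refine (hw.mem_of_adj_closed (S := G.cutSide x y ∩ G.cutSide y' x)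
    ⟨?_, self_mem_cutSide y' x⟩ ?_).1
  · exact mem_cutSide_of_adj (self_mem_cutSide x y) hxy' fun h => hne (Sym2.congr_right.1 h)
  rintro u v ⟨hu, hu'⟩ huv
  rw [deleteEdges_adj, Set.mem_singleton_iff] at huv
  have hv' : v ∈ G.cutSide y' x := mem_cutSide_of_adj hu' huv.1 huv.2
  refine ⟨mem_cutSide_of_adj hu huv.1 fun h => ?_, hv'⟩
  rcases Sym2.eq_iff.1 h with ⟨rfl, -⟩ | ⟨-, rfl⟩
  · exact hx hu'
  · exact hx hv'

lemma IsTree.existsUnique_adj_mem_cutSide (hG : G.IsTree) (hz : z ≠ x) :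
    ∃! y, G.Adj x y ∧ z ∈ G.cutSide y x := by
  obtain ⟨y, hxy, hy⟩ := hG.connected.preconnected.exists_adj_mem_cutSide hz
  refine ⟨y, ⟨hxy, hy⟩, fun y' ⟨hxy', hy'⟩ => by_contra fun hne => ?_⟩
  exact hG.isAcyclic.notMem_cutSide_swap hxy
    (hG.isAcyclic.cutSide_subset_cutSide hxy' hne hy') hy

lemma IsTree.sum_adj_indicator_cutSide [Fintype V] [DecidableEq V] [DecidableRel G.Adj]
    {M : Type*} [AddCommMonoid M] (hG : G.IsTree) (g : V → M) (x z : V) :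
    ∑ y, (if G.Adj x y then (G.cutSide y x).indicator g z else 0) =
      if z = x then 0 else g z := by
  split_ifs with hzx
  · subst hzx
    refine Finset.sum_eq_zero fun y _ => ite_eq_right_iff.2 fun hzy => ?_
    exact Set.indicator_of_notMem
      (hG.isAcyclic.notMem_cutSide_swap hzy (self_mem_cutSide z y)) g
  · obtain ⟨y₀, ⟨hxy₀, hy₀⟩, huniq⟩ := hG.existsUnique_adj_mem_cutSide hzx
    rw [Finset.sum_eq_single y₀ (fun y _ hne => ite_eq_right_iff.2 fun hxy => ?_) (by simp),
      if_pos hxy₀, Set.indicator_of_mem hy₀]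
    exact Set.indicator_of_notMem (fun hy => hne (huniq y ⟨hxy, hy⟩)) g

end SimpleGraph

namespace AcyclicRel

variable {r : V → V → Prop}

lemma irrefl (h : AcyclicRel r) (a : V) : ¬ r a a := fun haa => h a (.single haa)

lemma asymm (h : AcyclicRel r) {a b : V} (hab : r a b) : ¬ r b a :=
  fun hba => h a (.head hab (.single hba))

end AcyclicRel

section Digraph

variable {E : Set (V × V)} {a b u v : V}

lemma Tminus_eq_cutSide (E : Set (V × V)) (a b : V) :
    Tminus E (a, b) = (symGraph E).cutSide a b := rfl

lemma symGraph_adj_of_mem (hacyc : AcyclicRel (edgeRel E)) (h : (a, b) ∈ E) :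
    (symGraph E).Adj a b :=
  ⟨by rintro rfl; exact hacyc.irrefl a h, Or.inl h⟩

lemma mem_Tminus_of_mem_of_mem (hacyc : AcyclicRel (edgeRel E)) (hab : (a, b) ∈ E)
    (huv : (u, v) ∈ E) (hv : v ∈ Tminus E (a, b)) : u ∈ Tminus E (a, b) := by
  by_contra hu
  have hvu : (symGraph E).Adj v u := ⟨fun h => hu (h ▸ hv), Or.inr huv⟩
  rcases Sym2.eq_iff.1 (SimpleGraph.eq_of_adj_of_mem_cutSide_of_notMem hv hu hvu) with
    ⟨rfl, rfl⟩ | ⟨-, rfl⟩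
  · exact hacyc.asymm hab huv
  · exact hu (SimpleGraph.self_mem_cutSide _ _)

lemma eq_of_mem_Tminus_of_notMem (huv : (u, v) ∈ E) (hu : u ∈ Tminus E (a, b))
    (hv : v ∉ Tminus E (a, b)) : u = a ∧ v = b := by
  have huv' : (symGraph E).Adj u v := ⟨fun h => hv (h ▸ hu), Or.inl huv⟩
  rcases Sym2.eq_iff.1 (SimpleGraph.eq_of_adj_of_mem_cutSide_of_notMem hu hv huv') with
    h | ⟨-, rfl⟩
  · exact h
  · exact absurd (SimpleGraph.self_mem_cutSide _ _) hv

lemma mem_of_inducedLE_of_mem {T : Set V} (hT : ∀ u v, (u, v) ∈ E → v ∈ T → u ∈ T)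
    (huv : inducedLE E u v) (hv : v ∈ T) : u ∈ T := by
  induction huv using Relation.ReflTransGen.head_induction_on with
  | refl => exact hv
  | head hu _ ih => exact hT _ _ hu ih

end Digraph

section Finite

variable [Fintype V] {E : Set (V × V)} {μ₁ μ₂ : V → ℝ} {a b : V}

open Finset

lemma sum_divergenceF_eq_sum_compl [DecidableEq V] (Q : V × V → ℝ) (T : Finset V) :
    ∑ z ∈ T, divergenceF Q z = ∑ z ∈ T, ∑ y ∈ Tᶜ, (Q (z, y) - Q (y, z)) := by
  have split : ∀ g : V → V → ℝ,
      ∑ z ∈ T, ∑ y, g z y = ∑ z ∈ T, ∑ y ∈ T, g z y + ∑ z ∈ T, ∑ y ∈ Tᶜ, g z y := fun g => by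
    rw [← sum_add_distrib]
    exact sum_congr rfl fun z _ => (sum_add_sum_compl T _).symm
  simp only [divergenceF, sum_sub_distrib, split]
  rw [sum_comm (s := T) (t := T) (f := fun z y => Q (y, z))]
  ring

lemma sum_mul_divergenceF (f : V → ℝ) (Q : V × V → ℝ) :
    ∑ x, f x * divergenceF Q x = ∑ x, ∑ y, (f x - f y) * Q (x, y) := by
  simp only [divergenceF, mul_sub, sub_mul, mul_sum, sum_sub_distrib]
  rw [sum_comm (f := fun x y => f x * Q (y, x))]

lemma sum_indicator_divergenceF_Tminus (hacyc : AcyclicRel (edgeRel E))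
    (htree : (symGraph E).IsTree) (hab : (a, b) ∈ E) {Q : V × V → ℝ}
    (hQ : ∀ e ∉ E, Q e = 0) :
    ∑ z, (Tminus E (a, b)).indicator (divergenceF Q) z = Q (a, b) := by
  classical
  set T : Finset V := {z | z ∈ Tminus E (a, b)}
  have hcross : ∀ z ∈ T, ∀ y ∈ Tᶜ,
      Q (z, y) - Q (y, z) = if (z, y) = (a, b) then Q (a, b) else 0 := by
    intro z hz y hy
    rw [mem_filter_univ] at hz
    rw [mem_compl, mem_filter_univ] at hy
    rw [hQ (y, z) fun hyz => hy (mem_Tminus_of_mem_of_mem hacyc hab hyz hz), sub_zero]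
    by_cases hzy : (z, y) ∈ E
    · obtain ⟨rfl, rfl⟩ := eq_of_mem_Tminus_of_notMem hzy hz hy
      exact (if_pos rfl).symm
    · rw [hQ _ hzy, if_neg fun h : (z, y) = (a, b) => hzy (h ▸ hab)]
  have haT : a ∈ T := (mem_filter_univ _).2 (SimpleGraph.self_mem_cutSide a b)
  have hbT : b ∈ Tᶜ := mem_compl.2 fun h =>
    htree.notMem_cutSide_of_adj (symGraph_adj_of_mem hacyc hab) ((mem_filter_univ _).1 h)
  have hT : ∑ z, (Tminus E (a, b)).indicator (divergenceF Q) z = ∑ z ∈ T, divergenceF Q z := by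
    rw [sum_filter]
    exact sum_congr rfl fun z _ => Set.indicator_apply _ _ _
  rw [hT, sum_divergenceF_eq_sum_compl, sum_congr rfl fun z hz => sum_congr rfl (hcross z hz),
    ← sum_product', sum_ite_eq', if_pos (mem_product.2 ⟨haT, hbT⟩)]

lemma eq_treeSol_of_divergenceF_eq (hacyc : AcyclicRel (edgeRel E))
    (htree : (symGraph E).IsTree) {Q : V × V → ℝ} (hQ : ∀ e ∉ E, Q e = 0)
    (hdiv : ∀ x, divergenceF Q x = μ₁ x - μ₂ x) {e : V × V} (he : e ∈ E) :
    Q e = treeSol E μ₁ μ₂ e := by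
  obtain ⟨a, b⟩ := e
  rw [treeSol, ← sum_indicator_divergenceF_Tminus hacyc htree he hQ, funext hdiv]

lemma treeSol_swap (htree : (symGraph E).IsTree) (hμ : ∑ z, μ₁ z = ∑ z, μ₂ z)
    (hab : (symGraph E).Adj a b) : treeSol E μ₁ μ₂ (b, a) = -treeSol E μ₁ μ₂ (a, b) := by
  simp only [treeSol, Tminus_eq_cutSide, htree.cutSide_swap hab, Set.indicator_compl,
    Pi.sub_apply, sum_sub_distrib, hμ, sub_self, zero_sub]

lemma indicator_treeSol_sub_swap [DecidableRel (symGraph E).Adj]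
    (hacyc : AcyclicRel (edgeRel E)) (htree : (symGraph E).IsTree)
    (hμ : ∑ z, μ₁ z = ∑ z, μ₂ z) (x y : V) :
    E.indicator (treeSol E μ₁ μ₂) (x, y) - E.indicator (treeSol E μ₁ μ₂) (y, x) =
      if (symGraph E).Adj x y then -treeSol E μ₁ μ₂ (y, x) else 0 := by
  by_cases hxy : (x, y) ∈ E
  · have hadj := symGraph_adj_of_mem hacyc hxy
    rw [Set.indicator_of_mem hxy, Set.indicator_of_notMem (hacyc.asymm hxy), if_pos hadj,
      treeSol_swap htree hμ hadj, neg_neg, sub_zero]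
  by_cases hyx : (y, x) ∈ E
  · rw [Set.indicator_of_notMem hxy, Set.indicator_of_mem hyx,
      if_pos (symGraph_adj_of_mem hacyc hyx).symm, zero_sub]
  · rw [Set.indicator_of_notMem hxy, Set.indicator_of_notMem hyx,
      if_neg fun h => h.2.elim hxy hyx, sub_zero]

lemma divergenceF_indicator_treeSol (hacyc : AcyclicRel (edgeRel E))
    (htree : (symGraph E).IsTree) (hμ : ∑ z, μ₁ z = ∑ z, μ₂ z) (x : V) :
    divergenceF (E.indicator (treeSol E μ₁ μ₂)) x = μ₁ x - μ₂ x := by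
  classical
  calc divergenceF (E.indicator (treeSol E μ₁ μ₂)) x
      = ∑ y, if (symGraph E).Adj x y then -treeSol E μ₁ μ₂ (y, x) else 0 := by
        rw [divergenceF, ← sum_sub_distrib]
        exact sum_congr rfl fun y _ => indicator_treeSol_sub_swap hacyc htree hμ x y
    _ = -∑ z, ∑ y, if (symGraph E).Adj x y then
          ((symGraph E).cutSide y x).indicator (fun z => μ₁ z - μ₂ z) z else 0 := by
        rw [sum_comm, ← sum_neg_distrib]
        refine sum_congr rfl fun y _ => ?_
        split_ifs <;> simp [treeSol, Tminus_eq_cutSide]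
    _ = -∑ z, if z = x then 0 else μ₁ z - μ₂ z := by
        simp only [htree.sum_adj_indicator_cutSide]
    _ = μ₁ x - μ₂ x := by
        simp [sum_ite, filter_ne', sum_erase_eq_sub, sum_sub_distrib, hμ]

lemma stochDomF_of_isFlow {Q : V × V → ℝ} (hQ : IsFlow E Q)
    (hdiv : ∀ x, divergenceF Q x = μ₁ x - μ₂ x) : StochDomF (inducedLE E) μ₁ μ₂ := by
  intro f hf
  have hterm : ∀ x y, (f x - f y) * Q (x, y) ≤ 0 := by
    intro x y
    by_cases hxy : (x, y) ∈ E
    · exact mul_nonpos_of_nonpos_of_nonneg (sub_nonpos.2 (hf x y (.single hxy))) (hQ.1 _)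
    · rw [hQ.2 _ hxy, mul_zero]
  have hparts : ∑ x, f x * μ₁ x - ∑ x, f x * μ₂ x = ∑ x, ∑ y, (f x - f y) * Q (x, y) := by
    rw [← sum_mul_divergenceF, ← sum_sub_distrib]
    exact sum_congr rfl fun x _ => by rw [hdiv, mul_sub]
  exact sub_nonpos.1 (hparts ▸ sum_nonpos fun x _ => sum_nonpos fun y _ => hterm x y)

lemma StochDomF.sum_indicator_le {le : V → V → Prop} (h : StochDomF le μ₁ μ₂) {T : Set V}
    (hT : ∀ u v, le u v → v ∈ T → u ∈ T) :
    ∑ z, T.indicator μ₂ z ≤ ∑ z, T.indicator μ₁ z := by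
  have hmono : ∀ u v, le u v → -T.indicator 1 u ≤ -T.indicator (1 : V → ℝ) v := by
    intro u v huv
    by_cases hv : v ∈ T
    · simp [hv, hT u v huv hv]
    · simp only [Set.indicator_of_notMem hv, neg_zero, neg_nonpos]
      exact Set.indicator_nonneg (fun _ _ => zero_le_one) u
  have hind : ∀ (μ : V → ℝ) z, -T.indicator 1 z * μ z = -T.indicator μ z := by
    intro μ z
    by_cases hz : z ∈ T <;> simp [hz]
  simpa only [hind, sum_neg_distrib, neg_le_neg_iff] using h _ hmono

lemma treeSol_nonneg_of_stochDomF (hacyc : AcyclicRel (edgeRel E))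
    (h : StochDomF (inducedLE E) μ₁ μ₂) {e : V × V} (he : e ∈ E) : 0 ≤ treeSol E μ₁ μ₂ e := by
  obtain ⟨a, b⟩ := e
  have := h.sum_indicator_le fun u v huv hv =>
    mem_of_inducedLE_of_mem (fun u v => mem_Tminus_of_mem_of_mem hacyc he) huv hv
  rw [treeSol]
  simp only [Set.indicator_sub, sum_sub_distrib]
  linarith

end Finite

theorem tree_case_general {V : Type*} [Fintype V]
    (E : Set (V × V))
    (hacyc : AcyclicRel (edgeRel E)) (htree : (symGraph E).IsTree)
    (μ₁ μ₂ : V → ℝ) (h₁ : IsProbF μ₁) (h₂ : IsProbF μ₂) :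
    (∀ x, divergenceF (E.indicator (treeSol E μ₁ μ₂)) x = μ₁ x - μ₂ x) ∧
    (∀ Q : V × V → ℝ, (∀ e ∉ E, Q e = 0) → (∀ x, divergenceF Q x = μ₁ x - μ₂ x) →
      ∀ e ∈ E, Q e = treeSol E μ₁ μ₂ e) ∧
    (StochDomF (inducedLE E) μ₁ μ₂ ↔ ∀ e ∈ E, 0 ≤ treeSol E μ₁ μ₂ e) := by
  have hμ : ∑ x, μ₁ x = ∑ x, μ₂ x := h₁.2.trans h₂.2.symm
  have hdiv := divergenceF_indicator_treeSol hacyc htree hμ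
  refine ⟨hdiv, fun Q hQ hQdiv e he => eq_treeSol_of_divergenceF_eq hacyc htree hQ hQdiv he,
    fun h e he => treeSol_nonneg_of_stochDomF hacyc h he, fun hpos => ?_⟩
  exact stochDomF_of_isFlow
    ⟨Set.indicator_nonneg hpos, fun e he => Set.indicator_of_notMem he _⟩ hdiv

/-- **Finite trees.** If the undirected graph of an acyclic digraph `(V, E)` is a tree,
the equation `div Q = μ₁ - μ₂` has the unique real-valued solution
`Q(x,y) = ∑_{z ∈ T₋^{x,y}} (μ₁(z) - μ₂(z))`, and `μ₁ ⪯ μ₂` iff all these values are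
nonnegative. -/
theorem tree_case {V : Type*} [Fintype V]
    (E : Set (V × V)) (hloop : ∀ x : V, (x, x) ∉ E)
    (hacyc : AcyclicRel (edgeRel E)) (htree : (symGraph E).IsTree)
    (μ₁ μ₂ : V → ℝ) (h₁ : IsProbF μ₁) (h₂ : IsProbF μ₂) :
    (∀ x, divergenceF (E.indicator (treeSol E μ₁ μ₂)) x = μ₁ x - μ₂ x) ∧
    (∀ Q : V × V → ℝ, (∀ e ∉ E, Q e = 0) → (∀ x, divergenceF Q x = μ₁ x - μ₂ x) →
      ∀ e ∈ E, Q e = treeSol E μ₁ μ₂ e) ∧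
    (StochDomF (inducedLE E) μ₁ μ₂ ↔ ∀ e ∈ E, 0 ≤ treeSol E μ₁ μ₂ e) :=
  tree_case_general E hacyc htree μ₁ μ₂ h₁ h₂
end

section
/- Let V = {0,1}^N with the partial order η ≤ ξ iff η(i) ≤ ξ(i) for all i, and for η, ξ ∈ V let (η∨ξ)(i) = max{η(i),ξ(i)} and (η∧ξ)(i) = min{η(i),ξ(i)}. Let μ₁, μ₂ be probability measures on V and suppose there exist strictly positive (not necessarily normalized) measures m₁, m₂ on V satisfying the Holley condition m₂(η∨ξ) m₁(η∧ξ) ≥ m₂(η) m₁(ξ) for all η, ξ ∈ V and such that m₁ − m₂ = μ₁ − μ₂ pointwise. Then μ₁ ⪯ μ₂. -/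
open scoped BigOperators

variable {V : Type*}

open Finset

section DistribLattice

variable {α β : Type*} [DistribLattice α] [Fintype α]
  [CommRing β] [LinearOrder β] [IsStrictOrderedRing β]

/-- Since `f` and `g` have the same mass, shifting `μ` by a constant shifts both sides equally,
so `holley` extends to test functions that are only bounded below. -/
theorem holley' {μ f g : α → β} (hf : 0 ≤ f) (hg : 0 ≤ g) (hμ : Monotone μ)
    (hfg : ∑ a, f a = ∑ a, g a) (h : ∀ a b, f a * g b ≤ f (a ⊓ b) * g (a ⊔ b)) :
    ∑ a, μ a * f a ≤ ∑ a, μ a * g a := by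
  obtain ⟨c, hc⟩ := (Set.finite_range μ).bddBelow
  have hshift := holley f g (fun a ↦ μ a - c) (fun a ↦ sub_nonneg.2 (hc ⟨a, rfl⟩)) hf hg
    (fun a b hab ↦ sub_le_sub_right (hμ hab) c) hfg h
  simp only [sub_mul, sum_sub_distrib, ← mul_sum, hfg] at hshift
  simpa using hshift

/-- Only the difference `μ₁ - μ₂` enters `∑ f μ₁ ≤ ∑ f μ₂`, so Holley's inequality for
`m₁, m₂` transfers to any `μ₁, μ₂` with the same difference. -/
theorem holley_of_sub_eq_sub {μ₁ μ₂ m₁ m₂ : α → β} (hμ : ∑ a, μ₁ a = ∑ a, μ₂ a)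
    (hm₁ : 0 ≤ m₁) (hm₂ : 0 ≤ m₂) (hholley : ∀ a b, m₂ a * m₁ b ≤ m₂ (a ⊔ b) * m₁ (a ⊓ b))
    (hdiff : ∀ a, m₁ a - m₂ a = μ₁ a - μ₂ a) {f : α → β} (hf : Monotone f) :
    ∑ a, f a * μ₁ a ≤ ∑ a, f a * μ₂ a := by
  have hm : ∑ a, m₁ a = ∑ a, m₂ a := by
    rw [← sub_eq_zero, ← sum_sub_distrib]
    simp only [hdiff, sum_sub_distrib, hμ, sub_self]
  have hsub : ∑ a, f a * μ₁ a - ∑ a, f a * μ₂ a = ∑ a, f a * m₁ a - ∑ a, f a * m₂ a := by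
    simp only [← sum_sub_distrib, ← mul_sub, hdiff]
  have key := holley' hm₁ hm₂ hf hm fun a b ↦ by
    simpa only [mul_comm, inf_comm, sup_comm] using hholley b a
  linarith

end DistribLattice

/-- **A generalization of Holley's inequality.** If there are strictly positive measures
`m₁, m₂` on `{0,1}^N` satisfying the Holley condition and with `m₁ - m₂ = μ₁ - μ₂`,
then `μ₁ ⪯ μ₂`. -/
theorem generalized_holley (N : ℕ) (μ₁ μ₂ : (Fin N → Bool) → ℝ)
    (h₁ : IsProbF μ₁) (h₂ : IsProbF μ₂)
    (m₁ m₂ : (Fin N → Bool) → ℝ)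
    (hm₁ : ∀ η, 0 < m₁ η) (hm₂ : ∀ η, 0 < m₂ η)
    (hholley : ∀ η ξ, m₂ η * m₁ ξ ≤ m₂ (η ⊔ ξ) * m₁ (η ⊓ ξ))
    (hdiff : ∀ η, m₁ η - m₂ η = μ₁ η - μ₂ η) :
    ∀ f : (Fin N → Bool) → ℝ, Monotone f →
      ∑ η, f η * μ₁ η ≤ ∑ η, f η * μ₂ η :=
  fun _ hf ↦ holley_of_sub_eq_sub (h₁.2.trans h₂.2.symm) (fun η ↦ (hm₁ η).le)
    (fun η ↦ (hm₂ η).le) hholley hdiff hf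
end

section
/- Let μ₁, μ₂ be probability measures on ℤ, let w(x,x+1), w(x+1,x) ∈ (0,∞) be weights on the nearest-neighbour directed edges of ℤ, and let c(x,y) be the geodesic cost: the infimum over directed nearest-neighbour paths from x to y of the sum of the edge weights. Then inf_ρ E_ρ(c) = ∑_{x∈ℤ} ( w(x,x+1)[F₁(x) − F₂(x)]₊ + w(x+1,x)[F₂(x) − F₁(x)]₊ ), where the infimum is over all couplings ρ of μ₁ and μ₂, F_i(x) = ∑_{z ≤ x} μ_i(z), and [a]₊ = max{a,0}. In particular, when w(x,x+1) = w(x+1,x) = w({x,x+1}) the right-hand side equals ∑_x w({x,x+1}) |F₁(x) − F₂(x)|, and when all weights equal 1 (cost c(x,y) = |x−y|) it equals ∑_x |F₁(x) − F₂(x)|. -/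
open scoped BigOperators

variable {V : Type*}

/-- The distribution function of a measure on `ℤ`. -/
noncomputable def distFun (μ : ℤ → ℝ) (x : ℤ) : ℝ :=
  ∑' z, Set.indicator {z : ℤ | z ≤ x} μ z

/-- The nearest-neighbour digraph on `ℤ`. -/
def Ez : Set (ℤ × ℤ) := {p | p.2 = p.1 + 1 ∨ p.1 = p.2 + 1}

/-- The weight function on the nearest-neighbour digraph determined by the upward weights
`wp x = w(x, x+1)` and downward weights `wm x = w(x+1, x)`. -/
noncomputable def wz (wp wm : ℤ → ℝ) : ℤ × ℤ → ℝ :=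
  fun p => if p.2 = p.1 + 1 then wp p.1 else wm p.2

/-- The optimal transport cost between `μ₁` and `μ₂` for the cost `c`. -/
noncomputable def MKcost (c : ℤ → ℤ → ℝ) (μ₁ μ₂ : ℤ → ℝ) : ENNReal :=
  ⨅ ρ ∈ {ρ : ℤ × ℤ → ℝ | IsCoupling μ₁ μ₂ ρ},
    ∑' p : ℤ × ℤ, ENNReal.ofReal (c p.1 p.2 * ρ p)

/-!
On the nearest-neighbour graph of `ℤ` with nonnegative weights, the geodesic from `x` to `y` is
the straight walk. Hence the cost of a plan `ρ` splits over the edges: the edge `(t, t + 1)` is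
paid `w(t, t+1)` times the mass `ρ {x ≤ t < y}` carried upward across it, and `w(t+1, t)` times
the mass carried downward. For a coupling, `ρ {x ≤ t} = F₁ t` and `ρ {x ≤ t, y ≤ t} ≤ F₂ t`, so
the upward mass is at least `F₁ t - F₂ t`. The quantile coupling, the law of `(Q₁ U, Q₂ U)` for
`U` uniform on `(0, 1]`, attains this bound on every edge simultaneously: `Q₁ U ≤ t < Q₂ U`
forces `F₂ t < U ≤ F₁ t`.
-/

open Set Filter Topology MeasureTheory Function
open scoped ENNReal

section Paths

variable {E : Set (V × V)} {w : V × V → ℝ}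

def pathCosts (E : Set (V × V)) (w : V × V → ℝ) (x y : V) : Set ℝ :=
  {r | ∃ l, IsDipath E l ∧ l.head? = some x ∧ l.getLast? = some y ∧ pathCost w l = r}

lemma geoCost_eq_sInf_pathCosts (x y : V) : geoCost E w x y = sInf (pathCosts E w x y) := rfl

lemma pathCost_cons_cons (a b : V) (l : List V) :
    pathCost w (a :: b :: l) = w (a, b) + pathCost w (b :: l) := by
  simp [pathCost, pathEdges]

lemma zero_mem_pathCosts (x : V) : 0 ∈ pathCosts E w x x :=
  ⟨[x], ⟨List.cons_ne_nil _ _, List.isChain_singleton _⟩, rfl, rfl, by simp [pathCost, pathEdges]⟩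

lemma add_mem_pathCosts {a b y : V} {c : ℝ} (hab : (a, b) ∈ E) (hc : c ∈ pathCosts E w b y) :
    w (a, b) + c ∈ pathCosts E w a y := by
  obtain ⟨_ | ⟨b', l⟩, ⟨-, hl⟩, hb, hy, rfl⟩ := hc
  · simp at hb
  obtain rfl : b = b' := by simpa using hb.symm
  exact ⟨a :: b :: l, ⟨List.cons_ne_nil _ _, List.isChain_cons_cons.2 ⟨hab, hl⟩⟩, rfl,
    by rwa [List.getLast?_cons_cons], pathCost_cons_cons a b l⟩

end Paths

noncomputable def straightCost (wp wm : ℤ → ℝ) (x y : ℤ) : ℝ :=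
  ∑ t ∈ Finset.Ico x y, wp t + ∑ t ∈ Finset.Ico y x, wm t

section StraightCost

variable {wp wm : ℤ → ℝ}

lemma wz_up (a : ℤ) : wz wp wm (a, a + 1) = wp a := by simp [wz]

lemma wz_down (b : ℤ) : wz wp wm (b + 1, b) = wm b := by simp [wz]; omega

lemma straightCost_nonneg (hwp : ∀ x, 0 ≤ wp x) (hwm : ∀ x, 0 ≤ wm x) (x y : ℤ) :
    0 ≤ straightCost wp wm x y :=
  add_nonneg (Finset.sum_nonneg fun t _ => hwp t) (Finset.sum_nonneg fun t _ => hwm t)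

lemma straightCost_of_lt {a y : ℤ} (h : a < y) :
    straightCost wp wm a y = wp a + straightCost wp wm (a + 1) y := by
  rw [straightCost, straightCost, ← Finset.insert_Ico_add_one_left_eq_Ico h,
    Finset.sum_insert (by simp), Finset.Ico_eq_empty_of_le h.le,
    Finset.Ico_eq_empty_of_le (Int.add_one_le_iff.2 h), add_assoc]

lemma straightCost_add_one_of_le {a y : ℤ} (h : y ≤ a) :
    straightCost wp wm (a + 1) y = wm a + straightCost wp wm a y := by
  rw [straightCost, straightCost, ← Finset.sum_Ico_add_eq_sum_Ico_add_one h,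
    Finset.Ico_eq_empty_of_le h, Finset.Ico_eq_empty_of_le (h.trans (Int.le_add_one le_rfl))]
  ring

lemma straightCost_le_add_straightCost (hwp : ∀ x, 0 ≤ wp x) (hwm : ∀ x, 0 ≤ wm x)
    {a b : ℤ} (hab : (a, b) ∈ Ez) (y : ℤ) :
    straightCost wp wm a y ≤ wz wp wm (a, b) + straightCost wp wm b y := by
  rcases hab with hb | ha
  · obtain rfl : b = a + 1 := hb
    rw [wz_up]
    rcases lt_or_ge a y with h | h
    · rw [straightCost_of_lt h]
    · rw [straightCost_add_one_of_le h]; linarith [hwp a, hwm a]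
  · obtain rfl : a = b + 1 := ha
    rw [wz_down]
    rcases lt_or_ge b y with h | h
    · rw [straightCost_of_lt h]; linarith [hwp b, hwm b]
    · rw [straightCost_add_one_of_le h]

lemma straightCost_le_of_mem_pathCosts (hwp : ∀ x, 0 ≤ wp x) (hwm : ∀ x, 0 ≤ wm x)
    {x y : ℤ} {r : ℝ} (hr : r ∈ pathCosts Ez (wz wp wm) x y) : straightCost wp wm x y ≤ r := by
  obtain ⟨l, ⟨-, hl⟩, hx, hy, rfl⟩ := hr
  induction l generalizing x with
  | nil => simp at hx
  | cons a l ih =>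
    obtain rfl : x = a := by simpa using hx.symm
    cases l with
    | nil =>
      obtain rfl : y = x := by simpa using hy.symm
      simp [straightCost, pathCost, pathEdges]
    | cons b l =>
      obtain ⟨hab, hl⟩ := List.isChain_cons_cons.1 hl
      rw [List.getLast?_cons_cons] at hy
      rw [pathCost_cons_cons]
      linarith [straightCost_le_add_straightCost hwp hwm hab y, ih hl rfl hy]

lemma straightCost_mem_pathCosts (x y : ℤ) :
    straightCost wp wm x y ∈ pathCosts Ez (wz wp wm) x y := by
  rcases le_total x y with hxy | hyx
  · induction x, hxy using Int.leInductionDown with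
    | base => simpa [straightCost] using zero_mem_pathCosts y
    | pred x hx ih =>
      obtain ⟨a, rfl⟩ : ∃ a, x = a + 1 := ⟨x - 1, by ring⟩
      rw [add_sub_cancel_right, straightCost_of_lt (by omega)]
      simpa only [wz_up] using add_mem_pathCosts (Or.inl rfl) ih
  · induction x, hyx using Int.leInduction with
    | base => simpa [straightCost] using zero_mem_pathCosts y
    | succ x hx ih =>
      rw [straightCost_add_one_of_le hx]
      simpa only [wz_down] using add_mem_pathCosts (a := x + 1) (Or.inr rfl) ih

lemma geoCost_Ez_wz (hwp : ∀ x, 0 ≤ wp x) (hwm : ∀ x, 0 ≤ wm x) (x y : ℤ) :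
    geoCost Ez (wz wp wm) x y = straightCost wp wm x y :=
  (geoCost_eq_sInf_pathCosts x y).trans <| IsLeast.csInf_eq
    ⟨straightCost_mem_pathCosts x y, fun _ hr => straightCost_le_of_mem_pathCosts hwp hwm hr⟩

end StraightCost

noncomputable def crossingMass (r : ℤ × ℤ → ℝ≥0∞) (t : ℤ) : ℝ≥0∞ :=
  ∑' p : ℤ × ℤ, {p : ℤ × ℤ | t ∈ Ico p.1 p.2}.indicator r p

section Crossing

variable {wp wm : ℤ → ℝ}

lemma ofReal_straightCost (hwp : ∀ x, 0 ≤ wp x) (hwm : ∀ x, 0 ≤ wm x) (x y : ℤ) :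
    ENNReal.ofReal (straightCost wp wm x y) =
      ∑' t, ((Ico x y).indicator (fun t => ENNReal.ofReal (wp t)) t +
        (Ico y x).indicator (fun t => ENNReal.ofReal (wm t)) t) := by
  rw [straightCost, ENNReal.ofReal_add (Finset.sum_nonneg fun t _ => hwp t)
    (Finset.sum_nonneg fun t _ => hwm t), ENNReal.ofReal_sum_of_nonneg fun t _ => hwp t,
    ENNReal.ofReal_sum_of_nonneg fun t _ => hwm t, sum_eq_tsum_indicator, sum_eq_tsum_indicator,
    ENNReal.tsum_add, Finset.coe_Ico, Finset.coe_Ico]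

lemma tsum_ofReal_straightCost_mul (hwp : ∀ x, 0 ≤ wp x) (hwm : ∀ x, 0 ≤ wm x)
    (r : ℤ × ℤ → ℝ≥0∞) :
    ∑' p, ENNReal.ofReal (straightCost wp wm p.1 p.2) * r p =
      ∑' t, (ENNReal.ofReal (wp t) * crossingMass r t +
        ENNReal.ofReal (wm t) * crossingMass (fun p => r p.swap) t) := by
  have hswap (t : ℤ) : crossingMass (fun p => r p.swap) t =
      ∑' p, {p : ℤ × ℤ | t ∈ Ico p.2 p.1}.indicator r p :=
    (Equiv.prodComm ℤ ℤ).tsum_eq fun p => {p : ℤ × ℤ | t ∈ Ico p.2 p.1}.indicator r p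
  simp_rw [hswap, crossingMass, ← ENNReal.tsum_mul_left, ← ENNReal.tsum_add]
  rw [ENNReal.tsum_comm]
  refine tsum_congr fun p => ?_
  rw [ofReal_straightCost hwp hwm, ← ENNReal.tsum_mul_right]
  refine tsum_congr fun t => ?_
  simp only [indicator, mem_ofPred_eq]
  split_ifs <;> simp [add_mul]

end Crossing

section DistFun

variable {μ : ℤ → ℝ}

lemma distFun_nonneg (hμ : ∀ x, 0 ≤ μ x) (t : ℤ) : 0 ≤ distFun μ t :=
  tsum_nonneg fun _ => indicator_nonneg (fun x _ => hμ x) _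

lemma ofReal_distFun (hμ : IsProb μ) (t : ℤ) :
    ENNReal.ofReal (distFun μ t) = ∑' x, (Iic t).indicator (fun x => ENNReal.ofReal (μ x)) x := by
  rw [distFun, ENNReal.ofReal_tsum_of_nonneg (fun _ => indicator_nonneg (fun x _ => hμ.1 x) _)
    (hμ.2.summable.indicator _)]
  exact tsum_congr fun x => (congrFun (indicator_comp_of_zero ENNReal.ofReal_zero) x).symm

lemma distFun_sub_distFun_sub_one (hμ : Summable μ) (x : ℤ) :
    distFun μ x - distFun μ (x - 1) = μ x := by
  have hdiff : (Iic x).indicator μ - (Iic (x - 1)).indicator μ = Pi.single x (μ x) := by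
    rw [← indicator_sdiff (Iic_subset_Iic.2 (sub_le_self x zero_le_one)), ← indicator_singleton]
    congr; ext; simp; omega
  calc distFun μ x - distFun μ (x - 1)
      = ∑' z, ((Iic x).indicator μ - (Iic (x - 1)).indicator μ) z :=
        ((hμ.indicator _).tsum_sub (hμ.indicator _)).symm
    _ = μ x := by rw [hdiff, tsum_pi_single]

lemma tendsto_distFun_atTop (hμ : Summable μ) : Tendsto (distFun μ) atTop (𝓝 (∑' x, μ x)) :=
  tendsto_tsum_of_dominated_convergence hμ.abs
    (fun x => tendsto_const_nhds.congr' <| (eventually_ge_atTop x).mono fun t ht =>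
      (indicator_of_mem (show x ∈ Iic t from ht) μ).symm)
    (Eventually.of_forall fun _ x => norm_indicator_le_norm_self μ x)

lemma tendsto_distFun_atBot (hμ : Summable μ) : Tendsto (distFun μ) atBot (𝓝 0) := by
  have h := tendsto_tsum_of_dominated_convergence (𝓕 := atBot) (g := 0) hμ.abs
    (fun x => tendsto_const_nhds.congr' <| (eventually_lt_atBot x).mono fun t ht =>
      (indicator_of_notMem (show x ∉ Iic t from not_le.2 ht) μ).symm)
    (Eventually.of_forall fun _ x => norm_indicator_le_norm_self μ x)
  rwa [Pi.zero_def, tsum_zero] at h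

lemma monotone_distFun (hμ : IsProb μ) : Monotone (distFun μ) := fun _ _ hst =>
  (hμ.2.summable.indicator _).tsum_le_tsum
    (indicator_le_indicator_of_subset (Iic_subset_Iic.2 hst) fun x => hμ.1 x)
    (hμ.2.summable.indicator _)

end DistFun

structure IsIntCDF (F : ℤ → ℝ) : Prop where
  mono : Monotone F
  tendsto_atBot : Tendsto F atBot (𝓝 0)
  tendsto_atTop : Tendsto F atTop (𝓝 1)

lemma IsProb.isIntCDF_distFun {μ : ℤ → ℝ} (hμ : IsProb μ) : IsIntCDF (distFun μ) where
  mono := monotone_distFun hμ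
  tendsto_atBot := tendsto_distFun_atBot hμ.2.summable
  tendsto_atTop := hμ.2.tsum_eq ▸ tendsto_distFun_atTop hμ.2.summable

lemma IsIntCDF.nonneg {F : ℤ → ℝ} (hF : IsIntCDF F) (x : ℤ) : 0 ≤ F x :=
  hF.mono.le_of_tendsto hF.tendsto_atBot x

lemma IsIntCDF.le_one {F : ℤ → ℝ} (hF : IsIntCDF F) (x : ℤ) : F x ≤ 1 :=
  hF.mono.ge_of_tendsto hF.tendsto_atTop x

section Couplings

variable {μ₁ μ₂ : V → ℝ} {ρ : V × V → ℝ}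

lemma IsCoupling.swap (hρ : IsCoupling μ₁ μ₂ ρ) : IsCoupling μ₂ μ₁ (fun p => ρ p.swap) :=
  ⟨fun _ => hρ.1 _, hρ.2.2, hρ.2.1⟩

lemma IsCoupling.tsum_indicator_fst (hρ : IsCoupling μ₁ μ₂ ρ) (s : Set V) :
    ∑' p, (Prod.fst ⁻¹' s).indicator (fun p => ENNReal.ofReal (ρ p)) p =
      ∑' x, s.indicator (fun x => ENNReal.ofReal (μ₁ x)) x := by
  rw [ENNReal.tsum_prod']
  refine tsum_congr fun x => ?_
  by_cases hx : x ∈ s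
  · simp only [indicator, mem_preimage, hx, if_true]
    rw [← ENNReal.ofReal_tsum_of_nonneg (fun _ => hρ.1 _) (hρ.2.1 x).summable, (hρ.2.1 x).tsum_eq]
  · simp [indicator, hx]

lemma IsCoupling.tsum_indicator_snd (hρ : IsCoupling μ₁ μ₂ ρ) (s : Set V) :
    ∑' p, (Prod.snd ⁻¹' s).indicator (fun p => ENNReal.ofReal (ρ p)) p =
      ∑' y, s.indicator (fun y => ENNReal.ofReal (μ₂ y)) y := by
  rw [← hρ.swap.tsum_indicator_fst s]
  exact ((Equiv.prodComm V V).tsum_eq _).symm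

lemma ofReal_sub_le_crossingMass {μ₁ μ₂ : ℤ → ℝ} {ρ : ℤ × ℤ → ℝ} (h₁ : IsProb μ₁)
    (h₂ : IsProb μ₂) (hρ : IsCoupling μ₁ μ₂ ρ) (t : ℤ) :
    ENNReal.ofReal (distFun μ₁ t - distFun μ₂ t) ≤
      crossingMass (fun p => ENNReal.ofReal (ρ p)) t := by
  rw [ENNReal.ofReal_sub _ (distFun_nonneg h₂.1 t), ofReal_distFun h₁, ofReal_distFun h₂,
    ← hρ.tsum_indicator_fst, ← hρ.tsum_indicator_snd, tsub_le_iff_right, crossingMass,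
    ← ENNReal.tsum_add]
  refine ENNReal.tsum_le_tsum fun p => ?_
  simp only [indicator, mem_preimage, mem_Iic, mem_Ico, mem_ofPred_eq]
  split_ifs <;> first | omega | simp

end Couplings

/-- The levels `u` at which the quantile function `u ↦ min {x | u ≤ F x}` of `F` equals `x`. -/
def cdfCell (F : ℤ → ℝ) (x : ℤ) : Set ℝ := Ioc (F (x - 1)) (F x)

section Cells

variable {F G : ℤ → ℝ}

lemma Monotone.pairwise_disjoint_cdfCell (hF : Monotone F) : Pairwise (Disjoint on cdfCell F) := by
  show Pairwise (Disjoint on fun x => Ioc (F (x - 1)) (F x))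
  simpa [Order.pred_eq_sub_one] using hF.pairwise_disjoint_on_Ioc_pred

lemma pairwise_disjoint_cdfCell_inter (hF : Monotone F) (hG : Monotone G) :
    Pairwise (Disjoint on fun p : ℤ × ℤ => cdfCell F p.1 ∩ cdfCell G p.2) := by
  rintro ⟨x, y⟩ ⟨x', y'⟩ hne
  by_cases hx : x = x'
  · have hy : y ≠ y' := by rintro rfl; exact hne (by rw [hx])
    exact (hG.pairwise_disjoint_cdfCell hy).mono inter_subset_right inter_subset_right
  · exact (hF.pairwise_disjoint_cdfCell hx).mono inter_subset_left inter_subset_left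

lemma Ioo_subset_iUnion_cdfCell {a b : ℝ} (hbot : Tendsto F atBot (𝓝 a))
    (htop : Tendsto F atTop (𝓝 b)) : Ioo a b ⊆ ⋃ x, cdfCell F x := by
  rintro u ⟨hau, hub⟩
  obtain ⟨m, hm⟩ := eventually_atBot.1 (hbot.eventually (gt_mem_nhds hau))
  obtain ⟨M, hM⟩ := (htop.eventually (lt_mem_nhds hub)).exists
  obtain ⟨x, hx, hmin⟩ := Int.exists_least_of_bdd (P := fun z => u ≤ F z)
    ⟨m, fun z hz => le_of_not_gt fun h => (hm z h.le).not_ge hz⟩ ⟨M, hM.le⟩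
  exact mem_iUnion.2 ⟨x, not_le.1 fun h => by have := hmin (x - 1) h; omega, hx⟩

lemma tsum_volume_cdfCell_inter (hF : IsIntCDF F) (hG : IsIntCDF G) (x : ℤ) :
    ∑' y, volume (cdfCell F x ∩ cdfCell G y) = ENNReal.ofReal (F x - F (x - 1)) := by
  have hdisj : Pairwise (Disjoint on fun y => cdfCell F x ∩ cdfCell G y) :=
    hG.mono.pairwise_disjoint_cdfCell.mono fun _ _ h => h.mono inter_subset_right inter_subset_right
  rw [← measure_iUnion hdisj fun _ => measurableSet_Ioc.inter measurableSet_Ioc, ← inter_iUnion]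
  refine le_antisymm ((measure_mono inter_subset_left).trans_eq Real.volume_Ioc) ?_
  calc ENNReal.ofReal (F x - F (x - 1)) = volume (Ioo (F (x - 1)) (F x)) := Real.volume_Ioo.symm
    _ ≤ _ := measure_mono <| subset_inter Ioo_subset_Ioc_self <|
      (Ioo_subset_Ioo (hF.nonneg _) (hF.le_one _)).trans
        (Ioo_subset_iUnion_cdfCell hG.tendsto_atBot hG.tendsto_atTop)

end Cells

/-- The law of `(Q_F U, Q_G U)`, for the quantile functions `Q_F, Q_G` and `U` uniform on
`(0, 1]`. -/
noncomputable def quantileCoupling (F G : ℤ → ℝ) (p : ℤ × ℤ) : ℝ :=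
  (volume (cdfCell F p.1 ∩ cdfCell G p.2)).toReal

section QuantileCoupling

variable {F G : ℤ → ℝ}

lemma volume_cdfCell_inter_ne_top (F G : ℤ → ℝ) (x y : ℤ) :
    volume (cdfCell F x ∩ cdfCell G y) ≠ ∞ :=
  ((measure_mono inter_subset_left).trans_lt measure_Ioc_lt_top).ne

lemma ofReal_quantileCoupling (F G : ℤ → ℝ) (p : ℤ × ℤ) :
    ENNReal.ofReal (quantileCoupling F G p) = volume (cdfCell F p.1 ∩ cdfCell G p.2) :=
  ENNReal.ofReal_toReal (volume_cdfCell_inter_ne_top F G _ _)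

lemma quantileCoupling_swap (F G : ℤ → ℝ) (p : ℤ × ℤ) :
    quantileCoupling F G p.swap = quantileCoupling G F p := by
  rw [quantileCoupling, quantileCoupling, inter_comm]; rfl

lemma hasSum_quantileCoupling (hF : IsIntCDF F) (hG : IsIntCDF G) (x : ℤ) :
    HasSum (fun y => quantileCoupling F G (x, y)) (F x - F (x - 1)) := by
  have h := ENNReal.hasSum_toReal (f := fun y => volume (cdfCell F x ∩ cdfCell G y))
    (by rw [tsum_volume_cdfCell_inter hF hG]; exact ENNReal.ofReal_ne_top)
  rwa [← ENNReal.tsum_toReal_eq fun y => volume_cdfCell_inter_ne_top F G x y,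
    tsum_volume_cdfCell_inter hF hG, ENNReal.toReal_ofReal
      (sub_nonneg.2 (hF.mono (sub_le_self x zero_le_one)))] at h

lemma isCoupling_quantileCoupling {μ₁ μ₂ : ℤ → ℝ} (h₁ : IsProb μ₁) (h₂ : IsProb μ₂) :
    IsCoupling μ₁ μ₂ (quantileCoupling (distFun μ₁) (distFun μ₂)) := by
  refine ⟨fun _ => ENNReal.toReal_nonneg, fun x => ?_, fun y => ?_⟩
  · simpa only [distFun_sub_distFun_sub_one h₁.2.summable] using
      hasSum_quantileCoupling h₁.isIntCDF_distFun h₂.isIntCDF_distFun x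
  · have hsymm : (fun x => quantileCoupling (distFun μ₁) (distFun μ₂) (x, y)) =
        fun x => quantileCoupling (distFun μ₂) (distFun μ₁) (y, x) :=
      funext fun x => quantileCoupling_swap _ _ (y, x)
    simpa only [hsymm, distFun_sub_distFun_sub_one h₂.2.summable] using
      hasSum_quantileCoupling h₂.isIntCDF_distFun h₁.isIntCDF_distFun y

lemma crossingMass_quantileCoupling_le (hF : Monotone F) (hG : Monotone G) (t : ℤ) :
    crossingMass (fun p => ENNReal.ofReal (quantileCoupling F G p)) t ≤
      ENNReal.ofReal (F t - G t) := by
  have hcross (p : ℤ × ℤ) (hp : t ∈ Ico p.1 p.2) :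
      cdfCell F p.1 ∩ cdfCell G p.2 ⊆ Ioc (G t) (F t) := fun u ⟨hu₁, hu₂⟩ =>
    ⟨(hG (by linarith [hp.2] : t ≤ p.2 - 1)).trans_lt hu₂.1, hu₁.2.trans (hF hp.1)⟩
  calc crossingMass (fun p => ENNReal.ofReal (quantileCoupling F G p)) t
      ≤ ∑' p : ℤ × ℤ, volume (cdfCell F p.1 ∩ cdfCell G p.2 ∩ Ioc (G t) (F t)) := by
        refine ENNReal.tsum_le_tsum fun p => ?_
        simp only [indicator, mem_ofPred_eq, ofReal_quantileCoupling]
        split_ifs with hp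
        · rw [inter_eq_left.2 (hcross p hp)]
        · exact zero_le
    _ ≤ volume (⋃ p : ℤ × ℤ, cdfCell F p.1 ∩ cdfCell G p.2 ∩ Ioc (G t) (F t)) :=
        tsum_meas_le_meas_iUnion_of_disjoint _
          (fun _ => (measurableSet_Ioc.inter measurableSet_Ioc).inter measurableSet_Ioc)
          ((pairwise_disjoint_cdfCell_inter hF hG).mono fun _ _ h =>
            h.mono inter_subset_left inter_subset_left)
    _ ≤ volume (Ioc (G t) (F t)) := measure_mono (iUnion_subset fun _ => inter_subset_right)
    _ = ENNReal.ofReal (F t - G t) := Real.volume_Ioc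

end QuantileCoupling

section MongeKantorovich

variable {μ₁ μ₂ wp wm : ℤ → ℝ}

lemma cost_eq_tsum_crossingMass (hwp : ∀ x, 0 ≤ wp x) (hwm : ∀ x, 0 ≤ wm x)
    (ρ : ℤ × ℤ → ℝ) :
    ∑' p : ℤ × ℤ, ENNReal.ofReal (geoCost Ez (wz wp wm) p.1 p.2 * ρ p) =
      ∑' t, (ENNReal.ofReal (wp t) * crossingMass (fun p => ENNReal.ofReal (ρ p)) t +
        ENNReal.ofReal (wm t) * crossingMass (fun p => ENNReal.ofReal (ρ p.swap)) t) := by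
  simp_rw [geoCost_Ez_wz hwp hwm, ENNReal.ofReal_mul (straightCost_nonneg hwp hwm _ _)]
  exact tsum_ofReal_straightCost_mul hwp hwm _

theorem MKcost_geoCost_Ez (h₁ : IsProb μ₁) (h₂ : IsProb μ₂) (hwp : ∀ x, 0 ≤ wp x)
    (hwm : ∀ x, 0 ≤ wm x) :
    MKcost (geoCost Ez (wz wp wm)) μ₁ μ₂ =
      ∑' t, (ENNReal.ofReal (wp t) * ENNReal.ofReal (distFun μ₁ t - distFun μ₂ t) +
        ENNReal.ofReal (wm t) * ENNReal.ofReal (distFun μ₂ t - distFun μ₁ t)) := by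
  refine le_antisymm ?_ (le_iInf₂ fun ρ hρ => ?_)
  · refine (iInf₂_le _ (isCoupling_quantileCoupling h₁ h₂)).trans ?_
    rw [cost_eq_tsum_crossingMass hwp hwm]
    simp_rw [quantileCoupling_swap]
    gcongr with t
    · exact crossingMass_quantileCoupling_le (monotone_distFun h₁) (monotone_distFun h₂) t
    · exact crossingMass_quantileCoupling_le (monotone_distFun h₂) (monotone_distFun h₁) t
  · rw [cost_eq_tsum_crossingMass hwp hwm]
    gcongr with t
    · exact ofReal_sub_le_crossingMass h₁ h₂ hρ t
    · exact ofReal_sub_le_crossingMass h₂ h₁ hρ.swap t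

end MongeKantorovich

lemma ofReal_mul_max_zero {w : ℝ} (hw : 0 ≤ w) (a : ℝ) :
    ENNReal.ofReal (w * max a 0) = ENNReal.ofReal w * ENNReal.ofReal a := by
  rw [ENNReal.ofReal_mul hw, ENNReal.ofReal_max, ENNReal.ofReal_zero, max_zero]

lemma ofReal_abs_eq_add (a : ℝ) :
    ENNReal.ofReal |a| = ENNReal.ofReal a + ENNReal.ofReal (-a) := by
  rcases le_total 0 a with ha | ha
  · rw [abs_of_nonneg ha, ENNReal.ofReal_of_nonpos (neg_nonpos.2 ha), add_zero]
  · rw [abs_of_nonpos ha, ENNReal.ofReal_of_nonpos ha, zero_add]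

/-- **Explicit Monge–Kantorovich cost on `ℤ` for geodesic nearest-neighbour costs.**
With `[a]₊ = max a 0`, the optimal cost is
`∑ₓ (w(x,x+1) [F₁(x) - F₂(x)]₊ + w(x+1,x) [F₂(x) - F₁(x)]₊)`; in the symmetric case this is
`∑ₓ w({x,x+1}) |F₁(x) - F₂(x)|` and for unit weights `∑ₓ |F₁(x) - F₂(x)|`. -/
theorem one_dimensional_monge_kantorovich (μ₁ μ₂ : ℤ → ℝ)
    (h₁ : IsProb μ₁) (h₂ : IsProb μ₂)
    (wp wm : ℤ → ℝ) (hwp : ∀ x, 0 < wp x) (hwm : ∀ x, 0 < wm x) :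
    MKcost (geoCost Ez (wz wp wm)) μ₁ μ₂ =
      (∑' x : ℤ, (ENNReal.ofReal (wp x * max (distFun μ₁ x - distFun μ₂ x) 0) +
        ENNReal.ofReal (wm x * max (distFun μ₂ x - distFun μ₁ x) 0))) ∧
    ((∀ x, wp x = wm x) →
      MKcost (geoCost Ez (wz wp wm)) μ₁ μ₂ =
        ∑' x : ℤ, ENNReal.ofReal (wp x * |distFun μ₁ x - distFun μ₂ x|)) ∧
    ((∀ x, wp x = 1) → (∀ x, wm x = 1) →
      MKcost (geoCost Ez (wz wp wm)) μ₁ μ₂ =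
        ∑' x : ℤ, ENNReal.ofReal |distFun μ₁ x - distFun μ₂ x|) := by
  have hmain := MKcost_geoCost_Ez h₁ h₂ (fun x => (hwp x).le) (fun x => (hwm x).le)
  have hsymm (hs : ∀ x, wp x = wm x) : MKcost (geoCost Ez (wz wp wm)) μ₁ μ₂ =
      ∑' x : ℤ, ENNReal.ofReal (wp x * |distFun μ₁ x - distFun μ₂ x|) := by
    rw [hmain]
    refine tsum_congr fun x => ?_
    rw [ENNReal.ofReal_mul (hwp x).le, ofReal_abs_eq_add, mul_add, ← hs x, neg_sub]
  refine ⟨hmain.trans (tsum_congr fun x => ?_), hsymm, fun hp hm => ?_⟩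
  · rw [ofReal_mul_max_zero (hwp x).le, ofReal_mul_max_zero (hwm x).le]
  · simpa [hp] using hsymm fun x => (hp x).trans (hm x).symm
end

section
/- Let V = {0,1}^N with the coordinatewise partial order and the Hamming cost c(η,η') = ∑_{i=1}^N |η(i) − η'(i)|. Let μ₁, μ₂ be probability measures on V with μ₁ ⪯ μ₂. Then every coupling ρ of μ₁ and μ₂ that is compatible with the coordinatewise order (i.e. ρ({(η,η') : η ≤ η'}) = 1) is optimal for the Monge–Kantorovich problem: E_ρ(c) = min over all couplings ρ' of μ₁ and μ₂ of E_{ρ'}(c). -/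
open scoped BigOperators

variable {V : Type*}

/-- The Hamming cost on `{0,1}^N`. -/
noncomputable def hammingCost {N : ℕ} (η η' : Fin N → Bool) : ℝ :=
  ∑ i, if η i = η' i then 0 else 1



/-!
The number of ones `η ↦ #{i | η i}` is a Kantorovich potential for the Hamming cost:
its increments are bounded by the cost, with equality along the coordinatewise order.
Integrating the increments against any coupling gives the same number, the difference of
its means under `μ₂` and `μ₁`, so a coupling concentrated on `{η ≤ η'}` attains this lower
bound and is optimal.
-/

open Finset

section Potential

variable {V : Type*} [Fintype V]

theorem IsCouplingF.sum_sub_mul_eq {μ₁ μ₂ : V → ℝ} {τ : V × V → ℝ}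
    (hτ : IsCouplingF μ₁ μ₂ τ) (φ : V → ℝ) :
    ∑ p : V × V, (φ p.2 - φ p.1) * τ p = ∑ y, φ y * μ₂ y - ∑ x, φ x * μ₁ x := by
  simp only [sub_mul, sum_sub_distrib]
  congr 1
  · rw [Fintype.sum_prod_type, sum_comm]
    exact sum_congr rfl fun y _ => by rw [← hτ.2.2 y, mul_sum]
  · rw [Fintype.sum_prod_type]
    exact sum_congr rfl fun x _ => by rw [← hτ.2.1 x, mul_sum]

theorem IsCouplingF.sum_cost_mul_le_of_potential {μ₁ μ₂ : V → ℝ} {ρ ρ' : V × V → ℝ}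
    (hρ : IsCouplingF μ₁ μ₂ ρ) (hρ' : IsCouplingF μ₁ μ₂ ρ') (c : V → V → ℝ) (φ : V → ℝ)
    (hle : ∀ x y, φ y - φ x ≤ c x y) (htight : ∀ p, ρ p ≠ 0 → c p.1 p.2 = φ p.2 - φ p.1) :
    ∑ p : V × V, c p.1 p.2 * ρ p ≤ ∑ p : V × V, c p.1 p.2 * ρ' p :=
  calc ∑ p : V × V, c p.1 p.2 * ρ p
      = ∑ p : V × V, (φ p.2 - φ p.1) * ρ p := sum_congr rfl fun p _ => by
        by_cases hp : ρ p = 0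
        · simp [hp]
        · rw [htight p hp]
    _ = ∑ p : V × V, (φ p.2 - φ p.1) * ρ' p := by
        rw [hρ.sum_sub_mul_eq, hρ'.sum_sub_mul_eq]
    _ ≤ ∑ p : V × V, c p.1 p.2 * ρ' p :=
        sum_le_sum fun p _ => mul_le_mul_of_nonneg_right (hle p.1 p.2) (hρ'.1 p)

end Potential

section Hypercube

variable {N : ℕ}

noncomputable def numOnes (η : Fin N → Bool) : ℝ := ∑ i, if η i then 1 else 0

theorem numOnes_sub_le_hammingCost (η η' : Fin N → Bool) :
    numOnes η' - numOnes η ≤ hammingCost η η' := by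
  rw [numOnes, numOnes, hammingCost, ← sum_sub_distrib]
  exact sum_le_sum fun i _ => by cases η i <;> cases η' i <;> norm_num

theorem hammingCost_eq_numOnes_sub {η η' : Fin N → Bool} (h : η ≤ η') :
    hammingCost η η' = numOnes η' - numOnes η := by
  rw [numOnes, numOnes, hammingCost, ← sum_sub_distrib]
  refine sum_congr rfl fun i _ => ?_
  have hi := h i
  revert hi
  cases η i <;> cases η' i <;> simp

end Hypercube

theorem compatible_coupling_optimal_hypercube_general (N : ℕ) (μ₁ μ₂ : (Fin N → Bool) → ℝ)
    (ρ : (Fin N → Bool) × (Fin N → Bool) → ℝ) (hρ : IsCouplingF μ₁ μ₂ ρ)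
    (hcompat : ∀ p : (Fin N → Bool) × (Fin N → Bool), ρ p ≠ 0 → p.1 ≤ p.2) :
    ∀ ρ' : (Fin N → Bool) × (Fin N → Bool) → ℝ, IsCouplingF μ₁ μ₂ ρ' →
      ∑ p : (Fin N → Bool) × (Fin N → Bool), hammingCost p.1 p.2 * ρ p ≤
        ∑ p : (Fin N → Bool) × (Fin N → Bool), hammingCost p.1 p.2 * ρ' p :=
  fun _ hρ' => hρ.sum_cost_mul_le_of_potential hρ' hammingCost numOnes
    numOnes_sub_le_hammingCost fun p hp => hammingCost_eq_numOnes_sub (hcompat p hp)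

/-- **Compatible couplings are optimal on the hypercube.** If `μ₁ ⪯ μ₂` on `{0,1}^N` and
`ρ` is a coupling of `μ₁, μ₂` compatible with the coordinatewise order, then `ρ` is optimal
for the Monge–Kantorovich problem with the Hamming cost. -/
theorem compatible_coupling_optimal_hypercube (N : ℕ) (μ₁ μ₂ : (Fin N → Bool) → ℝ)
    (h₁ : IsProbF μ₁) (h₂ : IsProbF μ₂)
    (hdom : ∀ f : (Fin N → Bool) → ℝ, Monotone f →
      ∑ η, f η * μ₁ η ≤ ∑ η, f η * μ₂ η)
    (ρ : (Fin N → Bool) × (Fin N → Bool) → ℝ) (hρ : IsCouplingF μ₁ μ₂ ρ)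
    (hcompat : ∀ p : (Fin N → Bool) × (Fin N → Bool), ρ p ≠ 0 → p.1 ≤ p.2) :
    ∀ ρ' : (Fin N → Bool) × (Fin N → Bool) → ℝ, IsCouplingF μ₁ μ₂ ρ' →
      ∑ p : (Fin N → Bool) × (Fin N → Bool), hammingCost p.1 p.2 * ρ p ≤
        ∑ p : (Fin N → Bool) × (Fin N → Bool), hammingCost p.1 p.2 * ρ' p :=
  compatible_coupling_optimal_hypercube_general N μ₁ μ₂ ρ hρ hcompat
end
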